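/- arXiv:0806.1827 — 8 statements merged into one kernel-verified Lean document; each statement's English description precedes it below -/
import Mathlib

section
/- For every closed type expression τ, its unfolding τ* = { σ ∈ T | there exists a closed type expression τ' with τ ↝* τ' and σ ≼ τ' } is an ideal of simple types (non-empty, downward closed under ≼, and directed), i.e. τ* is a type tree in T∞. -/
set_option autoImplicit false

namespace RecLam

/-- Type expressions: type variables, separated sum, product, function space,
recursion `μt.τ`, and `void`. -/
inductive TyExpr : Type where
  | tvar : ℕ → TyExpr
  | sum : TyExpr → TyExpr → TyExpr
  | prod : TyExpr → TyExpr → TyExpr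
  | arrow : TyExpr → TyExpr → TyExpr
  | mu : ℕ → TyExpr → TyExpr
  | void : TyExpr
  deriving DecidableEq

namespace TyExpr

/-- Free type variables of a type expression. -/
def freeTV : TyExpr → Finset ℕ
  | .tvar t => {t}
  | .sum a b => freeTV a ∪ freeTV b
  | .prod a b => freeTV a ∪ freeTV b
  | .arrow a b => freeTV a ∪ freeTV b
  | .mu t a => (freeTV a).erase t
  | .void => ∅

/-- A type expression is closed (a *type*) iff it has no free type variables. -/
def Closed (τ : TyExpr) : Prop := freeTV τ = ∅

/-- `substTy σ t ρ` is `σ[ρ/t]`, substitution of `ρ` for the free occurrences of `t`. -/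
def substTy : TyExpr → ℕ → TyExpr → TyExpr
  | .tvar s, t, ρ => if s = t then ρ else .tvar s
  | .sum a b, t, ρ => .sum (substTy a t ρ) (substTy b t ρ)
  | .prod a b, t, ρ => .prod (substTy a t ρ) (substTy b t ρ)
  | .arrow a b, t, ρ => .arrow (substTy a t ρ) (substTy b t ρ)
  | .mu s a, t, ρ => if s = t then .mu s a else .mu s (substTy a t ρ)
  | .void, _, _ => .void

end TyExpr

/-- One-step unfolding `↝` of an outermost `μ`-redex. -/
inductive Unfold : TyExpr → TyExpr → Prop
  | mu (t : ℕ) (a : TyExpr) : Unfold (.mu t a) (TyExpr.substTy a t (.mu t a))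
  | sumL {a a' : TyExpr} (b : TyExpr) : Unfold a a' → Unfold (.sum a b) (.sum a' b)
  | sumR (a : TyExpr) {b b' : TyExpr} : Unfold b b' → Unfold (.sum a b) (.sum a b')
  | prodL {a a' : TyExpr} (b : TyExpr) : Unfold a a' → Unfold (.prod a b) (.prod a' b)
  | prodR (a : TyExpr) {b b' : TyExpr} : Unfold b b' → Unfold (.prod a b) (.prod a b')
  | arrowL {a a' : TyExpr} (b : TyExpr) : Unfold a a' → Unfold (.arrow a b) (.arrow a' b)
  | arrowR (a : TyExpr) {b b' : TyExpr} : Unfold b b' → Unfold (.arrow a b) (.arrow a b')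

/-- `↝*`, the reflexive transitive closure of one-step unfolding. -/
def Unfolds : TyExpr → TyExpr → Prop := Relation.ReflTransGen Unfold

/-- The `void`-prefix order `σ ≼ τ`: the least relation with `void ≼ τ` for all `τ`
and compatible with the constructors `+`, `×`, `→`.  Its left-hand sides are
exactly the simple types. -/
inductive Pre : TyExpr → TyExpr → Prop
  | void (τ : TyExpr) : Pre .void τ
  | sum {s s' t t' : TyExpr} : Pre s s' → Pre t t' → Pre (.sum s t) (.sum s' t')
  | prod {s s' t t' : TyExpr} : Pre s s' → Pre t t' → Pre (.prod s t) (.prod s' t')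
  | arrow {s s' t t' : TyExpr} : Pre s s' → Pre t t' → Pre (.arrow s t) (.arrow s' t')

/-- The unfolding `τ* = { σ ∈ T ∣ ∃ τ'. τ ↝* τ' ∧ σ ≼ τ' }` of a type `τ`. -/
def unfolding (τ : TyExpr) : Set TyExpr := {σ | ∃ τ', Unfolds τ τ' ∧ Pre σ τ'}

/-- Two types are equivalent iff they have the same unfolding as (regular) trees. -/
def TyEquiv (σ τ : TyExpr) : Prop := unfolding σ = unfolding τ

end RecLam

/-!
Downward closure is transitivity of `≼`. For directedness, let `σ ≼ τ₁` and `ρ ≼ τ₂` with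
`τ ↝* τ₁` and `τ ↝* τ₂`. By confluence both reduce to some `τ₃`; prefixes contain no `μ`, so they
survive unfolding and `σ, ρ ≼ τ₃`; and two prefixes of the same type are bounded by a third one.
-/

namespace RecLam

open Relation

theorem reflGen_map {α β : Type*} {r : α → α → Prop} {p : β → β → Prop} (f : α → β)
    (hf : ∀ a b, r a b → p (f a) (f b)) {a b : α} : ReflGen r a b → ReflGen p (f a) (f b)
  | .refl => .refl
  | .single h => .single (hf _ _ h)

/-- Two unfoldings either contract the same outermost redex or act in disjoint positions. -/
theorem Unfold.diamond {a b c : TyExpr} (hab : Unfold a b) (hac : Unfold a c) :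
    ∃ d, ReflGen Unfold b d ∧ ReflGen Unfold c d := by
  induction hab generalizing c with
  | mu => cases hac; exact ⟨_, .refl, .refl⟩
  | sumL b hab ih => cases hac with
    | sumL _ h =>
      obtain ⟨d, hd₁, hd₂⟩ := ih h
      exact ⟨.sum d b, reflGen_map (TyExpr.sum · b) (fun _ _ => Unfold.sumL b) hd₁,
        reflGen_map (TyExpr.sum · b) (fun _ _ => Unfold.sumL b) hd₂⟩
    | sumR _ h => exact ⟨_, .single (.sumR _ h), .single (.sumL _ hab)⟩
  | sumR a hab ih => cases hac with
    | sumL _ h => exact ⟨_, .single (.sumL _ h), .single (.sumR _ hab)⟩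
    | sumR _ h =>
      obtain ⟨d, hd₁, hd₂⟩ := ih h
      exact ⟨.sum a d, reflGen_map (TyExpr.sum a) (fun _ _ => Unfold.sumR a) hd₁,
        reflGen_map (TyExpr.sum a) (fun _ _ => Unfold.sumR a) hd₂⟩
  | prodL b hab ih => cases hac with
    | prodL _ h =>
      obtain ⟨d, hd₁, hd₂⟩ := ih h
      exact ⟨.prod d b, reflGen_map (TyExpr.prod · b) (fun _ _ => Unfold.prodL b) hd₁,
        reflGen_map (TyExpr.prod · b) (fun _ _ => Unfold.prodL b) hd₂⟩
    | prodR _ h => exact ⟨_, .single (.prodR _ h), .single (.prodL _ hab)⟩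
  | prodR a hab ih => cases hac with
    | prodL _ h => exact ⟨_, .single (.prodL _ h), .single (.prodR _ hab)⟩
    | prodR _ h =>
      obtain ⟨d, hd₁, hd₂⟩ := ih h
      exact ⟨.prod a d, reflGen_map (TyExpr.prod a) (fun _ _ => Unfold.prodR a) hd₁,
        reflGen_map (TyExpr.prod a) (fun _ _ => Unfold.prodR a) hd₂⟩
  | arrowL b hab ih => cases hac with
    | arrowL _ h =>
      obtain ⟨d, hd₁, hd₂⟩ := ih h
      exact ⟨.arrow d b, reflGen_map (TyExpr.arrow · b) (fun _ _ => Unfold.arrowL b) hd₁,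
        reflGen_map (TyExpr.arrow · b) (fun _ _ => Unfold.arrowL b) hd₂⟩
    | arrowR _ h => exact ⟨_, .single (.arrowR _ h), .single (.arrowL _ hab)⟩
  | arrowR a hab ih => cases hac with
    | arrowL _ h => exact ⟨_, .single (.arrowL _ h), .single (.arrowR _ hab)⟩
    | arrowR _ h =>
      obtain ⟨d, hd₁, hd₂⟩ := ih h
      exact ⟨.arrow a d, reflGen_map (TyExpr.arrow a) (fun _ _ => Unfold.arrowR a) hd₁,
        reflGen_map (TyExpr.arrow a) (fun _ _ => Unfold.arrowR a) hd₂⟩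

theorem Unfolds.join {a b c : TyExpr} (hab : Unfolds a b) (hac : Unfolds a c) :
    Join Unfolds b c :=
  church_rosser (fun _ _ _ hab hac =>
    (Unfold.diamond hab hac).imp fun _ h => ⟨h.1, h.2.to_reflTransGen⟩) hab hac

namespace Pre

theorem refl_left {σ τ : TyExpr} (h : Pre σ τ) : Pre σ σ := by
  induction h with
  | void => exact .void _
  | sum _ _ ihs iht => exact .sum ihs iht
  | prod _ _ ihs iht => exact .prod ihs iht
  | arrow _ _ ihs iht => exact .arrow ihs iht

theorem trans {a b c : TyExpr} (hab : Pre a b) (hbc : Pre b c) : Pre a c := by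
  induction hab generalizing c with
  | void => exact .void _
  | sum _ _ ihs iht => cases hbc with
    | sum hs ht => exact .sum (ihs hs) (iht ht)
  | prod _ _ ihs iht => cases hbc with
    | prod hs ht => exact .prod (ihs hs) (iht ht)
  | arrow _ _ ihs iht => cases hbc with
    | arrow hs ht => exact .arrow (ihs hs) (iht ht)

/-- A prefix contains no `μ`, so it survives unfolding anywhere inside the type. -/
theorem unfold {σ τ τ' : TyExpr} (hσ : Pre σ τ) (h : Unfold τ τ') : Pre σ τ' := by
  induction hσ generalizing τ' with
  | void => exact .void _
  | sum hs ht ihs iht => cases h with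
    | sumL _ h => exact .sum (ihs h) ht
    | sumR _ h => exact .sum hs (iht h)
  | prod hs ht ihs iht => cases h with
    | prodL _ h => exact .prod (ihs h) ht
    | prodR _ h => exact .prod hs (iht h)
  | arrow hs ht ihs iht => cases h with
    | arrowL _ h => exact .arrow (ihs h) ht
    | arrowR _ h => exact .arrow hs (iht h)

theorem unfolds {σ τ τ' : TyExpr} (hσ : Pre σ τ) (h : Unfolds τ τ') : Pre σ τ' := by
  induction h with
  | refl => exact hσ
  | tail _ h ih => exact ih.unfold h

theorem exists_common_extension {σ ρ τ : TyExpr} (hσ : Pre σ τ) (hρ : Pre ρ τ) :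
    ∃ ψ, Pre σ ψ ∧ Pre ρ ψ ∧ Pre ψ τ := by
  induction hσ generalizing ρ with
  | void => exact ⟨ρ, .void _, hρ.refl_left, hρ⟩
  | sum hs ht ihs iht => cases hρ with
    | void => exact ⟨_, .sum hs.refl_left ht.refl_left, .void _, .sum hs ht⟩
    | sum hs' ht' =>
      obtain ⟨ψ₁, h₁, h₁', h₁τ⟩ := ihs hs'
      obtain ⟨ψ₂, h₂, h₂', h₂τ⟩ := iht ht'
      exact ⟨.sum ψ₁ ψ₂, .sum h₁ h₂, .sum h₁' h₂', .sum h₁τ h₂τ⟩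
  | prod hs ht ihs iht => cases hρ with
    | void => exact ⟨_, .prod hs.refl_left ht.refl_left, .void _, .prod hs ht⟩
    | prod hs' ht' =>
      obtain ⟨ψ₁, h₁, h₁', h₁τ⟩ := ihs hs'
      obtain ⟨ψ₂, h₂, h₂', h₂τ⟩ := iht ht'
      exact ⟨.prod ψ₁ ψ₂, .prod h₁ h₂, .prod h₁' h₂', .prod h₁τ h₂τ⟩
  | arrow hs ht ihs iht => cases hρ with
    | void => exact ⟨_, .arrow hs.refl_left ht.refl_left, .void _, .arrow hs ht⟩
    | arrow hs' ht' =>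
      obtain ⟨ψ₁, h₁, h₁', h₁τ⟩ := ihs hs'
      obtain ⟨ψ₂, h₂, h₂', h₂τ⟩ := iht ht'
      exact ⟨.arrow ψ₁ ψ₂, .arrow h₁ h₂, .arrow h₁' h₂', .arrow h₁τ h₂τ⟩

end Pre

theorem unfolding_mem_Tinf_general (τ : TyExpr) :
    (unfolding τ).Nonempty ∧
    (∀ σ ∈ unfolding τ, ∀ ρ, Pre ρ σ → ρ ∈ unfolding τ) ∧
    (∀ σ ∈ unfolding τ, ∀ ρ ∈ unfolding τ,
      ∃ ψ ∈ unfolding τ, Pre σ ψ ∧ Pre ρ ψ) := by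
  refine ⟨⟨.void, τ, .refl, .void τ⟩, ?_, ?_⟩
  · rintro σ ⟨τ', hτ', hσ⟩ ρ hρ
    exact ⟨τ', hτ', hρ.trans hσ⟩
  · rintro σ ⟨τ₁, hτ₁, hσ⟩ ρ ⟨τ₂, hτ₂, hρ⟩
    obtain ⟨τ₃, h₁₃, h₂₃⟩ := hτ₁.join hτ₂
    obtain ⟨ψ, hσψ, hρψ, hψ⟩ := (hσ.unfolds h₁₃).exists_common_extension (hρ.unfolds h₂₃)
    exact ⟨ψ, ⟨τ₃, hτ₁.trans h₁₃, hψ⟩, hσψ, hρψ⟩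

/-- For every closed type expression `τ`, its unfolding
`τ* = { σ ∈ T ∣ ∃ τ'. τ ↝* τ' ∧ σ ≼ τ' }` is an ideal of simple types:
it is non-empty, downward closed under `≼`, and directed; i.e. `τ*` is a
type tree in `T∞`. -/
theorem unfolding_mem_Tinf (τ : TyExpr) (hτ : τ.Closed) :
    (unfolding τ).Nonempty ∧
    (∀ σ ∈ unfolding τ, ∀ ρ, Pre ρ σ → ρ ∈ unfolding τ) ∧
    (∀ σ ∈ unfolding τ, ∀ ρ ∈ unfolding τ,
      ∃ ψ ∈ unfolding τ, Pre σ ψ ∧ Pre ρ ψ) :=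
  unfolding_mem_Tinf_general τ

end RecLam
end

section
/- The reduction relation → of the recursively typed λ-calculus with parallel case satisfies the subject reduction property: if a typed term M has type σ and M →* N, then N also has type σ. -/
set_option autoImplicit false

namespace RecLam

/-- The constants of the calculus, with their type subscripts. -/
inductive Const : Type where
  | czero : TyExpr → TyExpr → Const      -- 0_{σ,τ} : σ → (σ+τ)   ("inleft")
  | cone : TyExpr → TyExpr → Const       -- 1_{σ,τ} : τ → (σ+τ)   ("inright")
  | ccase : TyExpr → TyExpr → TyExpr → Const   -- case_{σ,τ,ρ}
  | cpcase : TyExpr → TyExpr → TyExpr → Const  -- pcase_{σ,τ,ρ}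
  | cpair : TyExpr → TyExpr → Const      -- pair_{σ,τ}
  | cfst : TyExpr → TyExpr → Const       -- fst_{σ,τ}
  | csnd : TyExpr → TyExpr → Const       -- snd_{σ,τ}
  | comega : TyExpr → Const              -- Ω_σ
  deriving DecidableEq

/-- The type of each constant. -/
def constType : Const → TyExpr
  | .czero σ τ => .arrow σ (.sum σ τ)
  | .cone σ τ => .arrow τ (.sum σ τ)
  | .ccase σ τ ρ => .arrow (.sum σ τ) (.arrow (.arrow σ ρ) (.arrow (.arrow τ ρ) ρ))
  | .cpcase σ τ ρ => .arrow (.sum σ τ) (.arrow ρ (.arrow ρ ρ))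
  | .cpair σ τ => .arrow σ (.arrow τ (.prod σ τ))
  | .cfst σ τ => .arrow (.prod σ τ) σ
  | .csnd σ τ => .arrow (.prod σ τ) τ
  | .comega σ => σ

/-- Terms, in de Bruijn representation (so terms are identified up to α-conversion):
variables, constants, application and λ-abstraction (the binder carries the type of
the abstracted variable). -/
inductive Tm : Type where
  | var : ℕ → Tm
  | const : Const → Tm
  | app : Tm → Tm → Tm
  | lam : TyExpr → Tm → Tm
  deriving DecidableEq

/-- Lift (shift) the de Bruijn variables `≥ d` by one. -/
def liftTm (d : ℕ) : Tm → Tm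
  | .var n => if n < d then .var n else .var (n + 1)
  | .const c => .const c
  | .app M N => .app (liftTm d M) (liftTm d N)
  | .lam σ M => .lam σ (liftTm (d + 1) M)

/-- Capture-avoiding substitution `M[k := N]` (de Bruijn). -/
def substTm : Tm → ℕ → Tm → Tm
  | .var n, k, N => if n = k then N else if k < n then .var (n - 1) else .var n
  | .const c, _, _ => .const c
  | .app M P, k, N => .app (substTm M k N) (substTm P k N)
  | .lam σ M, k, N => .lam σ (substTm M (k + 1) (liftTm 0 N))

/-- The typing relation.  A context is a list of types of the free de Bruijn
variables.  It includes the rule (≈): a term of a type `σ` also has every type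
equivalent to `σ`. -/
inductive HasType : List TyExpr → Tm → TyExpr → Prop
  | var {Γ : List TyExpr} {n : ℕ} {σ : TyExpr} :
      Γ[n]? = some σ → HasType Γ (.var n) σ
  | const {Γ : List TyExpr} (c : Const) : HasType Γ (.const c) (constType c)
  | app {Γ : List TyExpr} {M N : Tm} {σ τ : TyExpr} :
      HasType Γ M (.arrow σ τ) → HasType Γ N σ → HasType Γ (.app M N) τ
  | lam {Γ : List TyExpr} {M : Tm} {σ τ : TyExpr} :
      HasType (σ :: Γ) M τ → HasType Γ (.lam σ M) (.arrow σ τ)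
  | equiv {Γ : List TyExpr} {M : Tm} {σ τ : TyExpr} :
      HasType Γ M σ → TyEquiv σ τ → HasType Γ M τ

/-- One-step reduction: β-reduction, the ten rewrite rules for the constants,
closed under arbitrary contexts. -/
inductive Step : Tm → Tm → Prop
  | beta (σ : TyExpr) (M N : Tm) :
      Step (.app (.lam σ M) N) (substTm M 0 N)
  | caseZero (σ τ ρ σ' τ' : TyExpr) (x y z : Tm) :
      Step (.app (.app (.app (.const (.ccase σ τ ρ)) (.app (.const (.czero σ' τ')) x)) y) z)
        (.app y x)
  | caseOne (σ τ ρ σ' τ' : TyExpr) (x y z : Tm) :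
      Step (.app (.app (.app (.const (.ccase σ τ ρ)) (.app (.const (.cone σ' τ')) x)) y) z)
        (.app z x)
  | fstPair (σ τ σ' τ' : TyExpr) (x y : Tm) :
      Step (.app (.const (.cfst σ τ)) (.app (.app (.const (.cpair σ' τ')) x) y)) x
  | sndPair (σ τ σ' τ' : TyExpr) (x y : Tm) :
      Step (.app (.const (.csnd σ τ)) (.app (.app (.const (.cpair σ' τ')) x) y)) y
  | pcaseZero (σ τ ρ σ' τ' : TyExpr) (x y z : Tm) :
      Step (.app (.app (.app (.const (.cpcase σ τ ρ)) (.app (.const (.czero σ' τ')) x)) y) z) y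
  | pcaseOne (σ τ ρ σ' τ' : TyExpr) (x y z : Tm) :
      Step (.app (.app (.app (.const (.cpcase σ τ ρ)) (.app (.const (.cone σ' τ')) x)) y) z) z
  | pcaseZZ (σ τ ρ₀ ρ₁ σ₁ τ₁ σ₂ τ₂ : TyExpr) (x y z : Tm) :
      Step (.app (.app (.app (.const (.cpcase σ τ (.sum ρ₀ ρ₁))) x)
              (.app (.const (.czero σ₁ τ₁)) y)) (.app (.const (.czero σ₂ τ₂)) z))
        (.app (.const (.czero ρ₀ ρ₁)) (.app (.app (.app (.const (.cpcase σ τ ρ₀)) x) y) z))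
  | pcaseOO (σ τ ρ₀ ρ₁ σ₁ τ₁ σ₂ τ₂ : TyExpr) (x y z : Tm) :
      Step (.app (.app (.app (.const (.cpcase σ τ (.sum ρ₀ ρ₁))) x)
              (.app (.const (.cone σ₁ τ₁)) y)) (.app (.const (.cone σ₂ τ₂)) z))
        (.app (.const (.cone ρ₀ ρ₁)) (.app (.app (.app (.const (.cpcase σ τ ρ₁)) x) y) z))
  | pcasePair (σ τ ρ₁ ρ₂ σ₁ τ₁ σ₂ τ₂ : TyExpr) (x y₁ y₂ z₁ z₂ : Tm) :
      Step (.app (.app (.app (.const (.cpcase σ τ (.prod ρ₁ ρ₂))) x)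
              (.app (.app (.const (.cpair σ₁ τ₁)) y₁) y₂))
              (.app (.app (.const (.cpair σ₂ τ₂)) z₁) z₂))
        (.app (.app (.const (.cpair ρ₁ ρ₂))
            (.app (.app (.app (.const (.cpcase σ τ ρ₁)) x) y₁) z₁))
          (.app (.app (.app (.const (.cpcase σ τ ρ₂)) x) y₂) z₂))
  | pcaseArrow (σ τ ρ₁ ρ₂ : TyExpr) (x y z w : Tm) :
      Step (.app (.app (.app (.app (.const (.cpcase σ τ (.arrow ρ₁ ρ₂))) x) y) z) w)
        (.app (.app (.app (.const (.cpcase σ τ ρ₂)) x) (.app y w)) (.app z w))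
  | appL {M M' : Tm} (N : Tm) : Step M M' → Step (.app M N) (.app M' N)
  | appR (M : Tm) {N N' : Tm} : Step N N' → Step (.app M N) (.app M N')
  | lamC (σ : TyExpr) {M M' : Tm} : Step M M' → Step (.lam σ M) (.lam σ M')

/-- `→*`, the reflexive transitive closure of one-step reduction. -/
def Steps : Tm → Tm → Prop := Relation.ReflTransGen Step

end RecLam

namespace RecLam

/-!
The constructors `+`, `×`, `→` are injective up to `≈`: the unfolding of `a + b` consists of
`void` and of the `s + t` with `s ∈ a*`, `t ∈ b*`, so `a*` is recovered from `(a + b)*` as the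
set of those `s` with `s + void ∈ (a + b)*`.  Injectivity gives generation lemmas for
application, abstraction and constants in spite of the rule (≈), and with them each reduction
rule is checked by reading off the types of the components of its redex; β-reduction needs in
addition the substitution lemma.
-/

inductive TyCtor : Type where
  | sum
  | prod
  | arrow

def TyCtor.apply : TyCtor → TyExpr → TyExpr → TyExpr
  | .sum => .sum
  | .prod => .prod
  | .arrow => .arrow

theorem void_mem_unfolding (τ : TyExpr) : TyExpr.void ∈ unfolding τ :=
  ⟨τ, .refl, .void τ⟩

namespace TyCtor

variable (k : TyCtor)

theorem apply_ne_void (a b : TyExpr) : k.apply a b ≠ .void := by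
  cases k <;> simp [apply]

theorem apply_inj {a b c d : TyExpr} : k.apply a b = k.apply c d ↔ a = c ∧ b = d := by
  cases k <;> simp [apply]

theorem unfold_apply_left {a a' : TyExpr} (b : TyExpr) (h : Unfold a a') :
    Unfold (k.apply a b) (k.apply a' b) := by
  cases k
  exacts [.sumL b h, .prodL b h, .arrowL b h]

theorem unfold_apply_right (a : TyExpr) {b b' : TyExpr} (h : Unfold b b') :
    Unfold (k.apply a b) (k.apply a b') := by
  cases k
  exacts [.sumR a h, .prodR a h, .arrowR a h]

theorem unfold_apply_inv {a b c : TyExpr} (h : Unfold (k.apply a b) c) :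
    (∃ a', Unfold a a' ∧ c = k.apply a' b) ∨ ∃ b', Unfold b b' ∧ c = k.apply a b' := by
  cases k <;> cases h <;> simp_all [apply]

theorem unfolds_apply {a a' b b' : TyExpr} (ha : Unfolds a a') (hb : Unfolds b b') :
    Unfolds (k.apply a b) (k.apply a' b') :=
  (ha.lift (k.apply · b) fun _ _ => k.unfold_apply_left b).trans
    (hb.lift (k.apply a' ·) fun _ _ => k.unfold_apply_right a')

theorem unfolds_apply_inv {a b c : TyExpr} (h : Unfolds (k.apply a b) c) :
    ∃ a' b', c = k.apply a' b' ∧ Unfolds a a' ∧ Unfolds b b' := by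
  induction h with
  | refl => exact ⟨a, b, rfl, .refl, .refl⟩
  | tail _ hstep ih =>
    obtain ⟨a', b', rfl, ha, hb⟩ := ih
    rcases k.unfold_apply_inv hstep with ⟨a'', ha', rfl⟩ | ⟨b'', hb', rfl⟩
    exacts [⟨a'', b', rfl, ha.tail ha', hb⟩, ⟨a', b'', rfl, ha, hb.tail hb'⟩]

theorem pre_apply {s t a b : TyExpr} (hs : Pre s a) (ht : Pre t b) :
    Pre (k.apply s t) (k.apply a b) := by
  cases k
  exacts [.sum hs ht, .prod hs ht, .arrow hs ht]

theorem pre_apply_inv {x a b : TyExpr} (h : Pre x (k.apply a b)) :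
    x = .void ∨ ∃ s t, x = k.apply s t ∧ Pre s a ∧ Pre t b := by
  cases k <;> cases h <;> simp_all [apply]

theorem mem_unfolding_apply {a b x : TyExpr} :
    x ∈ unfolding (k.apply a b) ↔
      x = .void ∨ ∃ s t, x = k.apply s t ∧ s ∈ unfolding a ∧ t ∈ unfolding b := by
  constructor
  · rintro ⟨c, hc, hx⟩
    obtain ⟨a', b', rfl, ha, hb⟩ := k.unfolds_apply_inv hc
    rcases k.pre_apply_inv hx with rfl | ⟨s, t, rfl, hs, ht⟩
    exacts [.inl rfl, .inr ⟨s, t, rfl, ⟨a', ha, hs⟩, ⟨b', hb, ht⟩⟩]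
  · rintro (rfl | ⟨s, t, rfl, ⟨a', ha, hs⟩, ⟨b', hb, ht⟩⟩)
    exacts [⟨_, .refl, .void _⟩, ⟨_, k.unfolds_apply ha hb, k.pre_apply hs ht⟩]

theorem apply_void_mem_unfolding_apply {a b x : TyExpr} :
    k.apply x .void ∈ unfolding (k.apply a b) ↔ x ∈ unfolding a := by
  simp [mem_unfolding_apply, apply_ne_void, apply_inj, void_mem_unfolding]

theorem void_apply_mem_unfolding_apply {a b x : TyExpr} :
    k.apply .void x ∈ unfolding (k.apply a b) ↔ x ∈ unfolding b := by
  simp [mem_unfolding_apply, apply_ne_void, apply_inj, void_mem_unfolding]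

end TyCtor

namespace TyEquiv

theorem apply_congr (k : TyCtor) {a b c d : TyExpr} (hac : TyEquiv a c) (hbd : TyEquiv b d) :
    TyEquiv (k.apply a b) (k.apply c d) := by
  ext x
  rw [k.mem_unfolding_apply, k.mem_unfolding_apply, hac, hbd]

theorem apply_inj (k : TyCtor) {a b c d : TyExpr} (h : TyEquiv (k.apply a b) (k.apply c d)) :
    TyEquiv a c ∧ TyEquiv b d := by
  constructor <;> ext x
  · rw [← k.apply_void_mem_unfolding_apply, h, k.apply_void_mem_unfolding_apply]
  · rw [← k.void_apply_mem_unfolding_apply, h, k.void_apply_mem_unfolding_apply]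

theorem sum_inj {a b c d : TyExpr} (h : TyEquiv (.sum a b) (.sum c d)) :
    TyEquiv a c ∧ TyEquiv b d :=
  apply_inj .sum h

theorem prod_inj {a b c d : TyExpr} (h : TyEquiv (.prod a b) (.prod c d)) :
    TyEquiv a c ∧ TyEquiv b d :=
  apply_inj .prod h

theorem arrow_inj {a b c d : TyExpr} (h : TyEquiv (.arrow a b) (.arrow c d)) :
    TyEquiv a c ∧ TyEquiv b d :=
  apply_inj .arrow h

end TyEquiv

theorem getElem?_append_cons_of_lt {α : Type*} {Γ₁ Γ₂ : List α} {n : ℕ} (a : α)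
    (h : n < Γ₁.length) : (Γ₁ ++ a :: Γ₂)[n]? = (Γ₁ ++ Γ₂)[n]? := by
  rw [List.getElem?_append_left h, List.getElem?_append_left h]

theorem getElem?_append_cons_succ {α : Type*} {Γ₁ Γ₂ : List α} {n : ℕ} (a : α)
    (h : Γ₁.length ≤ n) : (Γ₁ ++ a :: Γ₂)[n + 1]? = (Γ₁ ++ Γ₂)[n]? := by
  rw [List.getElem?_append_right (by omega), List.getElem?_append_right h,
    Nat.sub_add_comm h, List.getElem?_cons_succ]

namespace HasType

variable {Γ : List TyExpr}

theorem lift {Γ₁ Γ₂ : List TyExpr} {M : Tm} {σ : TyExpr} (ρ : TyExpr)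
    (h : HasType (Γ₁ ++ Γ₂) M σ) : HasType (Γ₁ ++ ρ :: Γ₂) (liftTm Γ₁.length M) σ := by
  generalize hΓ : Γ₁ ++ Γ₂ = Γ at h
  induction h generalizing Γ₁ with subst hΓ
  | @var _ n _ hn =>
    unfold liftTm
    split_ifs with hlt
    · exact var ((getElem?_append_cons_of_lt ρ hlt).trans hn)
    · exact var ((getElem?_append_cons_succ ρ (by omega)).trans hn)
  | const c => exact const c
  | app _ _ ihM ihN => exact app (ihM rfl) (ihN rfl)
  | @lam _ _ σ' _ _ ih => exact lam (ih (Γ₁ := σ' :: Γ₁) rfl)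
  | equiv _ hequiv ih => exact (ih rfl).equiv hequiv

theorem substTm {Γ₁ Γ₂ : List TyExpr} {M N : Tm} {σ τ : TyExpr}
    (hM : HasType (Γ₁ ++ τ :: Γ₂) M σ) (hN : HasType (Γ₁ ++ Γ₂) N τ) :
    HasType (Γ₁ ++ Γ₂) (substTm M Γ₁.length N) σ := by
  generalize hΓ : Γ₁ ++ τ :: Γ₂ = Γ at hM
  induction hM generalizing Γ₁ N with subst hΓ
  | @var _ n _ hn =>
    unfold RecLam.substTm
    split_ifs with heq hgt
    · subst heq
      simp_all
    · obtain ⟨m, rfl⟩ : ∃ m, n = m + 1 := ⟨n - 1, by omega⟩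
      exact var ((getElem?_append_cons_succ τ (by omega)).symm.trans hn)
    · exact var ((getElem?_append_cons_of_lt τ (by omega)).symm.trans hn)
  | const c => exact const c
  | app _ _ ihM ihN => exact app (ihM hN rfl) (ihN hN rfl)
  | @lam _ _ σ' _ _ ih => exact lam (ih (Γ₁ := σ' :: Γ₁) (hN.lift (Γ₁ := []) σ') rfl)
  | equiv _ hequiv ih => exact (ih hN rfl).equiv hequiv

theorem const_inv {c : Const} {π : TyExpr} (h : HasType Γ (.const c) π) :
    TyEquiv (constType c) π := by
  generalize hc : Tm.const c = P at h
  induction h with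
  | const => cases hc; rfl
  | equiv _ hequiv ih => exact (ih hc).trans hequiv
  | _ => cases hc

theorem app_inv {M N : Tm} {π : TyExpr} (h : HasType Γ (.app M N) π) :
    ∃ α, HasType Γ M (.arrow α π) ∧ HasType Γ N α := by
  generalize hMN : Tm.app M N = P at h
  induction h with
  | app hM hN => cases hMN; exact ⟨_, hM, hN⟩
  | equiv _ hequiv ih =>
    obtain ⟨α, hM, hN⟩ := ih hMN
    exact ⟨α, hM.equiv (TyEquiv.apply_congr .arrow rfl hequiv), hN⟩
  | _ => cases hMN

theorem lam_inv {σ π : TyExpr} {M : Tm} (h : HasType Γ (.lam σ M) π) :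
    ∃ τ, HasType (σ :: Γ) M τ ∧ TyEquiv (.arrow σ τ) π := by
  generalize hlam : Tm.lam σ M = P at h
  induction h with
  | lam hM => cases hlam; exact ⟨_, hM, rfl⟩
  | equiv _ hequiv ih =>
    obtain ⟨τ, hM, he⟩ := ih hlam
    exact ⟨τ, hM, he.trans hequiv⟩
  | _ => cases hlam

end HasType

def UniquelyTyped (Γ : List TyExpr) (M : Tm) (τ : TyExpr) : Prop :=
  ∀ ⦃π⦄, HasType Γ M π → TyEquiv τ π

namespace UniquelyTyped

variable {Γ : List TyExpr} {M x y z : Tm} {α β γ δ π : TyExpr}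

theorem const (Γ : List TyExpr) (c : Const) : UniquelyTyped Γ (.const c) (constType c) :=
  fun _ h => h.const_inv

theorem app_inv (hM : UniquelyTyped Γ M (.arrow α β)) (h : HasType Γ (.app M x) π) :
    HasType Γ x α ∧ TyEquiv β π := by
  obtain ⟨α', hM', hx⟩ := h.app_inv
  obtain ⟨hα, hβ⟩ := TyEquiv.arrow_inj (hM hM')
  exact ⟨hx.equiv hα.symm, hβ⟩

theorem app (hM : UniquelyTyped Γ M (.arrow α β)) (x : Tm) : UniquelyTyped Γ (.app M x) β :=
  fun _ h => (hM.app_inv h).2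

theorem app₂_inv (hM : UniquelyTyped Γ M (.arrow α (.arrow β γ)))
    (h : HasType Γ (.app (.app M x) y) π) :
    HasType Γ x α ∧ HasType Γ y β ∧ TyEquiv γ π := by
  obtain ⟨_, hMx, -⟩ := h.app_inv
  exact ⟨(hM.app_inv hMx).1, (hM.app x).app_inv h⟩

theorem app₃_inv (hM : UniquelyTyped Γ M (.arrow α (.arrow β (.arrow γ δ))))
    (h : HasType Γ (.app (.app (.app M x) y) z) π) :
    HasType Γ x α ∧ HasType Γ y β ∧ HasType Γ z γ ∧ TyEquiv δ π := by
  obtain ⟨_, hMxy, -⟩ := h.app_inv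
  exact ⟨(hM.app₂_inv hMxy).1, (hM.app x).app₂_inv h⟩

end UniquelyTyped

namespace HasType

variable {Γ : List TyExpr} {x y : Tm} {σ τ σ' τ' : TyExpr}

theorem inl_inv (h : HasType Γ (.app (.const (.czero σ' τ')) x) (.sum σ τ)) : HasType Γ x σ := by
  obtain ⟨hx, hsum⟩ := (UniquelyTyped.const Γ _).app_inv h
  exact hx.equiv (TyEquiv.sum_inj hsum).1

theorem inr_inv (h : HasType Γ (.app (.const (.cone σ' τ')) x) (.sum σ τ)) : HasType Γ x τ := by
  obtain ⟨hx, hsum⟩ := (UniquelyTyped.const Γ _).app_inv h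
  exact hx.equiv (TyEquiv.sum_inj hsum).2

theorem pair_inv (h : HasType Γ (.app (.app (.const (.cpair σ' τ')) x) y) (.prod σ τ)) :
    HasType Γ x σ ∧ HasType Γ y τ := by
  obtain ⟨hx, hy, hprod⟩ := (UniquelyTyped.const Γ _).app₂_inv h
  exact ⟨hx.equiv (TyEquiv.prod_inj hprod).1, hy.equiv (TyEquiv.prod_inj hprod).2⟩

theorem beta_reduct {M N : Tm} {π : TyExpr} (h : HasType Γ (.app (.lam σ M) N) π) :
    HasType Γ (RecLam.substTm M 0 N) π := by
  obtain ⟨α, hlam, hN⟩ := h.app_inv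
  obtain ⟨τ, hM, hequiv⟩ := hlam.lam_inv
  obtain ⟨hσ, hτ⟩ := TyEquiv.arrow_inj hequiv
  exact (hM.substTm (Γ₁ := []) (hN.equiv hσ.symm)).equiv hτ

theorem pcase {ρ : TyExpr} {z : Tm} (hx : HasType Γ x (.sum σ τ)) (hy : HasType Γ y ρ)
    (hz : HasType Γ z ρ) : HasType Γ (.app (.app (.app (.const (.cpcase σ τ ρ)) x) y) z) ρ :=
  (((const _).app hx).app hy).app hz

theorem pcasePair_reduct {ρ₁ ρ₂ σ₁ τ₁ σ₂ τ₂ π : TyExpr} {y₁ y₂ z₁ z₂ : Tm}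
    (h : HasType Γ (.app (.app (.app (.const (.cpcase σ τ (.prod ρ₁ ρ₂))) x)
      (.app (.app (.const (.cpair σ₁ τ₁)) y₁) y₂)) (.app (.app (.const (.cpair σ₂ τ₂)) z₁) z₂)) π) :
    HasType Γ (.app (.app (.const (.cpair ρ₁ ρ₂))
      (.app (.app (.app (.const (.cpcase σ τ ρ₁)) x) y₁) z₁))
      (.app (.app (.app (.const (.cpcase σ τ ρ₂)) x) y₂) z₂)) π := by
  obtain ⟨hx, hy, hz, hρ⟩ := (UniquelyTyped.const Γ _).app₃_inv h
  obtain ⟨hy₁, hy₂⟩ := hy.pair_inv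
  obtain ⟨hz₁, hz₂⟩ := hz.pair_inv
  exact (((const _).app (hx.pcase hy₁ hz₁)).app (hx.pcase hy₂ hz₂)).equiv hρ

theorem pcaseArrow_reduct {ρ₁ ρ₂ π : TyExpr} {z w : Tm}
    (h : HasType Γ (.app (.app (.app (.app (.const (.cpcase σ τ (.arrow ρ₁ ρ₂))) x) y) z) w) π) :
    HasType Γ (.app (.app (.app (.const (.cpcase σ τ ρ₂)) x) (.app y w)) (.app z w)) π := by
  obtain ⟨α, hpcase, hw⟩ := h.app_inv
  obtain ⟨hx, hy, hz, hρ⟩ := (UniquelyTyped.const Γ _).app₃_inv hpcase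
  obtain ⟨hα, hπ⟩ := TyEquiv.arrow_inj hρ
  exact (hx.pcase (hy.app (hw.equiv hα.symm)) (hz.app (hw.equiv hα.symm))).equiv hπ

theorem step {M N : Tm} {π : TyExpr} (hs : Step M N) (h : HasType Γ M π) :
    HasType Γ N π := by
  induction hs generalizing Γ π with
  | beta => exact h.beta_reduct
  | caseZero =>
    obtain ⟨hx, hy, -, hρ⟩ := (UniquelyTyped.const Γ _).app₃_inv h
    exact (hy.app hx.inl_inv).equiv hρ
  | caseOne =>
    obtain ⟨hx, -, hz, hρ⟩ := (UniquelyTyped.const Γ _).app₃_inv h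
    exact (hz.app hx.inr_inv).equiv hρ
  | fstPair =>
    obtain ⟨hp, hσ⟩ := (UniquelyTyped.const Γ _).app_inv h
    exact hp.pair_inv.1.equiv hσ
  | sndPair =>
    obtain ⟨hp, hτ⟩ := (UniquelyTyped.const Γ _).app_inv h
    exact hp.pair_inv.2.equiv hτ
  | pcaseZero =>
    obtain ⟨-, hy, -, hρ⟩ := (UniquelyTyped.const Γ _).app₃_inv h
    exact hy.equiv hρ
  | pcaseOne =>
    obtain ⟨-, -, hz, hρ⟩ := (UniquelyTyped.const Γ _).app₃_inv h
    exact hz.equiv hρ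
  | pcaseZZ =>
    obtain ⟨hx, hy, hz, hρ⟩ := (UniquelyTyped.const Γ _).app₃_inv h
    exact ((const _).app (hx.pcase hy.inl_inv hz.inl_inv)).equiv hρ
  | pcaseOO =>
    obtain ⟨hx, hy, hz, hρ⟩ := (UniquelyTyped.const Γ _).app₃_inv h
    exact ((const _).app (hx.pcase hy.inr_inv hz.inr_inv)).equiv hρ
  | pcasePair => exact h.pcasePair_reduct
  | pcaseArrow => exact h.pcaseArrow_reduct
  | appL _ _ ih =>
    obtain ⟨_, hM, hN⟩ := h.app_inv
    exact (ih hM).app hN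
  | appR _ _ ih =>
    obtain ⟨_, hM, hN⟩ := h.app_inv
    exact hM.app (ih hN)
  | lamC _ _ ih =>
    obtain ⟨τ, hM, hequiv⟩ := h.lam_inv
    exact (ih hM).lam.equiv hequiv

end HasType

/-- **Subject reduction.**  If a typed term `M` has type `σ`
and `M →* N`, then `N` also has type `σ`. -/
theorem subject_reduction (Γ : List TyExpr) (M N : Tm) (σ : TyExpr)
    (hM : HasType Γ M σ) (hMN : Steps M N) : HasType Γ N σ := by
  induction hMN with
  | refl => exact hM
  | tail _ hs ih => exact ih.step hs

end RecLam
end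

section
/- The reduction relation generated by the ten constant rewrite rules (case 0), (case 1), (pair 1), (pair 2), (pcase 0), (pcase 1), (pcase 00), (pcase 11), (pcase ××), (pcase →) is noetherian (strongly normalizing) on applicative terms, i.e. terms built only from variables, constants and application without λ-abstraction. In particular there exists a map φ from applicative terms to the integers ≥ 2 such that M → N implies φ(M) > φ(N), where φ satisfies: φ(M) = 2 for variables and constants, φ(0 M) = φ(1 M) = φ(pcase M) = 2·φ(M), φ(pcase M N) = 2·φ(M)·φ(N), φ(pcase M N P) = 2·φ(M)·φ(N)·φ(P), φ(pair M) = 2 + φ(M), φ(pair M N) = 2 + φ(M) + φ(N), and φ(M N) = φ(M)^{φ(N)} for all other applications. -/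
/-!
The weight of an application `M N` is `φ M ⊙ φ N`, where `⊙ ∈ {+, *, ^}` is determined by
the head `M`, and every weight is at least `2`. Each rule decreases `φ` at the root by an
elementary inequality; the key one is `φ (case (0 x) y z) = 2 ^ (2 φx φy φz) > φy ^ φx ≥ φ (y x)`,
using that `φ (M N) ≤ φ M ^ φ N` always. Weights are strictly monotone in both parts of an
application, because a step inside a special head does not change its operation. Hence `φ`
decreases along reduction of applicative terms, which stay applicative, and well-founded
induction on `φ` gives strong normalization.
-/

set_option autoImplicit false

namespace RecLam

/-- Applicative terms: terms without any λ-abstraction. -/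
def NoLam : Tm → Prop
  | .var _ => True
  | .const _ => True
  | .app M N => NoLam M ∧ NoLam N
  | .lam _ _ => False

/-- The heads whose applications get a special `φ`-value in the termination
measure: `0`, `1`, `pcase` (with 0, 1 or 2 arguments) and `pair` (with 0 or
1 argument). -/
def IsSpecialHead (M : Tm) : Prop :=
  (∃ σ τ, M = .const (.czero σ τ)) ∨ (∃ σ τ, M = .const (.cone σ τ)) ∨
  (∃ σ τ ρ, M = .const (.cpcase σ τ ρ)) ∨
  (∃ σ τ ρ P, M = .app (.const (.cpcase σ τ ρ)) P) ∨
  (∃ σ τ ρ P Q, M = .app (.app (.const (.cpcase σ τ ρ)) P) Q) ∨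
  (∃ σ τ, M = .const (.cpair σ τ)) ∨
  (∃ σ τ P, M = .app (.const (.cpair σ τ)) P)

inductive AppOp : Type where
  | add
  | mul
  | pow

namespace AppOp

def eval : AppOp → ℕ → ℕ → ℕ
  | add, a, b => a + b
  | mul, a, b => a * b
  | pow, a, b => a ^ b

variable (o : AppOp) {a a' b b' : ℕ}

theorem two_le_eval (ha : 2 ≤ a) (hb : 2 ≤ b) : 2 ≤ o.eval a b := by
  cases o
  · exact le_add_right ha
  · exact ha.trans (Nat.le_mul_of_pos_right a (by omega))
  · exact ha.trans (Nat.le_self_pow (by omega) a)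

theorem eval_le_pow (ha : 2 ≤ a) (hb : 2 ≤ b) : o.eval a b ≤ a ^ b := by
  have mul_le_pow : a * b ≤ a ^ b := Nat.mul_le_pow (by omega) b
  cases o
  · exact (show a + b ≤ a * b by nlinarith).trans mul_le_pow
  · exact mul_le_pow
  · exact le_rfl

theorem eval_lt_eval_left (h : a < a') (hb : 1 ≤ b) : o.eval a b < o.eval a' b := by
  cases o
  · exact Nat.add_lt_add_right h b
  · exact Nat.mul_lt_mul_of_pos_right h hb
  · exact Nat.pow_lt_pow_left h (by omega)

theorem eval_lt_eval_right (ha : 2 ≤ a) (h : b < b') : o.eval a b < o.eval a b' := by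
  cases o
  · exact Nat.add_lt_add_left h a
  · exact Nat.mul_lt_mul_of_pos_left h (by omega)
  · exact Nat.pow_lt_pow_right ha h

end AppOp

/-- With `phi` of every atom equal to `2`, each special equation of the paper's `φ` reads
`φ (M N) = φ M ⊙ φ N` for an operation `⊙` fixed by the head `M`: for instance
`φ (pcase M N) = 2 * φ M * φ N = φ (pcase M) * φ N` and `φ (pair M N) = φ (pair M) + φ N`. -/
def headOp : Tm → AppOp
  | .const (.czero _ _) => .mul
  | .const (.cone _ _) => .mul
  | .const (.cpcase _ _ _) => .mul
  | .app (.const (.cpcase _ _ _)) _ => .mul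
  | .app (.app (.const (.cpcase _ _ _)) _) _ => .mul
  | .const (.cpair _ _) => .add
  | .app (.const (.cpair _ _)) _ => .add
  | _ => .pow

def phi : Tm → ℕ
  | .app M N => (headOp M).eval (phi M) (phi N)
  | _ => 2

theorem phi_app (M N : Tm) : phi (.app M N) = (headOp M).eval (phi M) (phi N) := rfl

theorem two_le_phi : ∀ M : Tm, 2 ≤ phi M
  | .app M N => (headOp M).two_le_eval (two_le_phi M) (two_le_phi N)
  | .var _ | .const _ | .lam _ _ => le_rfl

theorem phi_app_le_pow (M N : Tm) : phi (.app M N) ≤ phi M ^ phi N :=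
  (headOp M).eval_le_pow (two_le_phi M) (two_le_phi N)

theorem headOp_eq_pow_of_not_isSpecialHead {M : Tm} (h : ¬ IsSpecialHead M) :
    headOp M = .pow := by
  rcases M with _ | c | ⟨_ | c | ⟨_ | c | _ | _, _⟩ | _, _⟩ | _ <;> (try cases c) <;>
    simp_all [IsSpecialHead, headOp]

theorem Step.noLam {M N : Tm} (h : Step M N) (hM : NoLam M) : NoLam N := by
  induction h <;> simp_all [NoLam]

/-- No rule contracts a special head, so a step inside one keeps its shape. -/
theorem Step.headOp_eq {M N : Tm} (h : Step M N) (hM : headOp M ≠ .pow) :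
    headOp N = headOp M := by
  rcases M with _ | c | ⟨_ | c | ⟨_ | c | _ | _, _⟩ | _, _⟩ | _ <;> (try cases c) <;>
    simp only [headOp, ne_eq, not_true_eq_false, reduceCtorEq] at hM <;>
    (cases h <;> try (rename_i h; cases h <;> try (rename_i h; cases h))) <;> rfl

theorem pow_lt_case_weight {a b c d : ℕ} (ha : 1 ≤ a) (hd : d ≤ b * c) :
    d ^ a < ((2 ^ (2 * a)) ^ b) ^ c :=
  calc d ^ a < (2 ^ d) ^ a := Nat.pow_lt_pow_left Nat.lt_two_pow_self (by omega)
    _ = 2 ^ (d * a) := (pow_mul 2 d a).symm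
    _ ≤ 2 ^ (2 * a * b * c) := Nat.pow_le_pow_right two_pos (by nlinarith)
    _ = ((2 ^ (2 * a)) ^ b) ^ c := by rw [← pow_mul, ← pow_mul, mul_assoc (2 * a)]

theorem pcase_arrow_weight_lt {a b c d B C : ℕ} (ha : 1 ≤ a) (hb : 1 ≤ b) (hc : 1 ≤ c)
    (hd : 2 ≤ d) (hB : B ≤ b ^ d) (hC : C ≤ c ^ d) : 2 * a * B * C < (2 * a * b * c) ^ d :=
  calc 2 * a * B * C ≤ 2 * a * b ^ d * c ^ d := by gcongr
    _ < (2 * a) ^ d * b ^ d * c ^ d := by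
      have : 2 * a < (2 * a) ^ d := by
        simpa using Nat.pow_lt_pow_right (show 1 < 2 * a by omega) (show 1 < d by omega)
      gcongr
    _ = (2 * a * b * c) ^ d := by simp only [mul_pow]

theorem phi_app_lt_phi_app_left {M M' : Tm} (N : Tm) (h : Step M M') (hlt : phi M' < phi M) :
    phi (.app M' N) < phi (.app M N) := by
  have hN : 1 ≤ phi N := by have := two_le_phi N; omega
  by_cases hpow : headOp M = .pow
  · calc phi (.app M' N) ≤ phi M' ^ phi N := phi_app_le_pow M' N
      _ < phi M ^ phi N := Nat.pow_lt_pow_left hlt (by omega)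
      _ = phi (.app M N) := by rw [phi_app, hpow]; rfl
  · rw [phi_app, phi_app, h.headOp_eq hpow]
    exact (headOp M).eval_lt_eval_left hlt hN

theorem Step.phi_lt {M N : Tm} (h : Step M N) (hM : NoLam M) : phi N < phi M := by
  induction h with
  | beta | lamC => simp [NoLam] at hM
  | caseZero _ _ _ _ _ x y z =>
    show phi (.app y x) < ((2 ^ (2 * phi x)) ^ phi y) ^ phi z
    have hx := two_le_phi x; have hz := two_le_phi z
    exact (phi_app_le_pow y x).trans_lt
      (pow_lt_case_weight (by omega) (Nat.le_mul_of_pos_right _ (by omega)))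
  | caseOne _ _ _ _ _ x y z =>
    show phi (.app z x) < ((2 ^ (2 * phi x)) ^ phi y) ^ phi z
    have hx := two_le_phi x; have hy := two_le_phi y
    exact (phi_app_le_pow z x).trans_lt
      (pow_lt_case_weight (by omega) (Nat.le_mul_of_pos_left _ (by omega)))
  | fstPair _ _ _ _ x y =>
    show phi x < 2 ^ (2 + phi x + phi y)
    exact Nat.lt_two_pow_self.trans_le (Nat.pow_le_pow_right two_pos (by omega))
  | sndPair _ _ _ _ x y =>
    show phi y < 2 ^ (2 + phi x + phi y)
    exact Nat.lt_two_pow_self.trans_le (Nat.pow_le_pow_right two_pos (by omega))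
  | pcaseZero _ _ _ _ _ x y z =>
    show phi y < 2 * (2 * phi x) * phi y * phi z
    have hx := two_le_phi x; have hy := two_le_phi y; have hz := two_le_phi z
    nlinarith [Nat.mul_le_mul hx hz, Nat.mul_le_mul (Nat.mul_le_mul hx hz) hy]
  | pcaseOne _ _ _ _ _ x y z =>
    show phi z < 2 * (2 * phi x) * phi y * phi z
    have hx := two_le_phi x; have hy := two_le_phi y; have hz := two_le_phi z
    nlinarith [Nat.mul_le_mul hx hy, Nat.mul_le_mul (Nat.mul_le_mul hx hy) hz]
  | pcaseZZ _ _ _ _ _ _ _ _ x y z | pcaseOO _ _ _ _ _ _ _ _ x y z =>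
    show 2 * (2 * phi x * phi y * phi z) < 2 * phi x * (2 * phi y) * (2 * phi z)
    have hx := two_le_phi x; have hy := two_le_phi y; have hz := two_le_phi z
    nlinarith [Nat.mul_le_mul (Nat.mul_le_mul hx hy) hz]
  | pcasePair _ _ _ _ _ _ _ _ x y₁ y₂ z₁ z₂ =>
    show 2 + 2 * phi x * phi y₁ * phi z₁ + 2 * phi x * phi y₂ * phi z₂
      < 2 * phi x * (2 + phi y₁ + phi y₂) * (2 + phi z₁ + phi z₂)
    have hx := two_le_phi x; have hy₁ := two_le_phi y₁; have hy₂ := two_le_phi y₂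
    have hz₁ := two_le_phi z₁; have hz₂ := two_le_phi z₂
    nlinarith [Nat.mul_le_mul (Nat.mul_le_mul hx hy₁) hz₂, Nat.mul_le_mul (Nat.mul_le_mul hx hy₂) hz₁]
  | pcaseArrow _ _ _ _ x y z w =>
    show 2 * phi x * phi (.app y w) * phi (.app z w) < (2 * phi x * phi y * phi z) ^ phi w
    have hx := two_le_phi x; have hy := two_le_phi y; have hz := two_le_phi z
    exact pcase_arrow_weight_lt (by omega) (by omega) (by omega) (two_le_phi w)
      (phi_app_le_pow y w) (phi_app_le_pow z w)
  | appL N h ih => exact phi_app_lt_phi_app_left N h (ih hM.1)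
  | @appR M _ _ _ ih => exact (headOp M).eval_lt_eval_right (two_le_phi M) (ih hM.2)

theorem acc_of_noLam (M : Tm) (hM : NoLam M) : Acc (fun N M => Step M N) M := by
  induction hφ : phi M using Nat.strong_induction_on generalizing M with
  | _ n ih =>
    exact ⟨_, fun N h => ih (phi N) (hφ ▸ h.phi_lt hM) N (h.noLam hM) rfl⟩

/-- The reduction generated by the ten constant rewrite rules is
noetherian (strongly normalizing) on applicative terms; in particular there is a map
`φ` from applicative terms to the integers `≥ 2` that strictly decreases under
reduction and satisfies the defining equations of the termination measure.
(On applicative terms no β-redex and no λ-context exists, so `Step` is exactly the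
reduction generated by the ten constant rules.) -/
theorem applicative_strongly_normalizing :
    (∀ M : Tm, NoLam M → Acc (fun N M => Step M N) M) ∧
    ∃ φ : Tm → ℕ,
      (∀ M, NoLam M → 2 ≤ φ M) ∧
      (∀ M N, NoLam M → Step M N → φ N < φ M) ∧
      (∀ n, φ (.var n) = 2) ∧
      (∀ c, φ (.const c) = 2) ∧
      (∀ σ τ M, φ (.app (.const (.czero σ τ)) M) = 2 * φ M) ∧
      (∀ σ τ M, φ (.app (.const (.cone σ τ)) M) = 2 * φ M) ∧
      (∀ σ τ ρ M, φ (.app (.const (.cpcase σ τ ρ)) M) = 2 * φ M) ∧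
      (∀ σ τ ρ M N, φ (.app (.app (.const (.cpcase σ τ ρ)) M) N) = 2 * φ M * φ N) ∧
      (∀ σ τ ρ M N P,
        φ (.app (.app (.app (.const (.cpcase σ τ ρ)) M) N) P) = 2 * φ M * φ N * φ P) ∧
      (∀ σ τ M, φ (.app (.const (.cpair σ τ)) M) = 2 + φ M) ∧
      (∀ σ τ M N, φ (.app (.app (.const (.cpair σ τ)) M) N) = 2 + φ M + φ N) ∧
      (∀ M N, ¬ IsSpecialHead M → φ (.app M N) = φ M ^ φ N) :=
  ⟨acc_of_noLam, phi, fun M _ => two_le_phi M, fun _ _ hM h => h.phi_lt hM,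
    fun _ => rfl, fun _ => rfl, fun _ _ _ => rfl, fun _ _ _ => rfl, fun _ _ _ _ => rfl,
    fun _ _ _ _ _ => rfl, fun _ _ _ _ _ _ => rfl, fun _ _ _ => rfl, fun _ _ _ _ => rfl,
    fun M N h => by rw [phi_app, headOp_eq_pow_of_not_isSpecialHead h]; rfl⟩

end RecLam
end

section
/- For any term rewriting system R and any →_R-complete subset T of terms: the reduction relation →_R is locally confluent on T if and only if every critical pair (P, Q) of R possessing an overlap belonging to T satisfies P ↓ Q (P and Q have a common reduct). -/
set_option autoImplicit false

namespace TRS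

universe u

/-- First-order terms over a set `F` of function symbols, with variables `ℕ`. -/
inductive FTerm (F : Type u) : Type u where
  | var : ℕ → FTerm F
  | fn : F → List (FTerm F) → FTerm F

namespace FTerm

variable {F : Type u}

/-- Apply a substitution to a term. -/
def applySubst (s : ℕ → FTerm F) : FTerm F → FTerm F
  | .var n => s n
  | .fn f as => .fn f (as.attach.map fun a => applySubst s a.1)
decreasing_by
  have := List.sizeOf_lt_of_mem a.2
  simp only [FTerm.fn.sizeOf_spec]
  omega

/-- The set of variables occurring in a term. -/
def fvars : FTerm F → Set ℕ
  | .var n => {n}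
  | .fn _ as => {n | ∃ a ∈ as.attach, n ∈ fvars a.1}
decreasing_by
  have := List.sizeOf_lt_of_mem a.2
  simp only [FTerm.fn.sizeOf_spec]
  omega

/-- The subterm of `M` at occurrence (position) `p`, if it exists. -/
def subtermAt : FTerm F → List ℕ → Option (FTerm F)
  | t, [] => some t
  | .var _, _ :: _ => none
  | .fn _ as, i :: p =>
    match h : as[i]? with
    | some a => subtermAt a p
    | none => none
termination_by t _ => sizeOf t
decreasing_by
  have := List.sizeOf_lt_of_mem (List.mem_of_getElem? h)
  simp only [FTerm.fn.sizeOf_spec]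
  omega

/-- Replace the subterm of `M` at occurrence `p` by `u` (`M[p ← u]`), if possible. -/
def replaceAt : FTerm F → List ℕ → FTerm F → Option (FTerm F)
  | _, [], u => some u
  | .var _, _ :: _, _ => none
  | .fn f as, i :: p, u =>
    match h : as[i]? with
    | some a => (replaceAt a p u).map fun a' => .fn f (as.set i a')
    | none => none
termination_by t _ _ => sizeOf t
decreasing_by
  have := List.sizeOf_lt_of_mem (List.mem_of_getElem? h)
  simp only [FTerm.fn.sizeOf_spec]
  omega

/-- Iterated replacement `M[u₁ ← x]…[uₙ ← x]`. -/
def replaceList (M : FTerm F) (us : List (List ℕ)) (u : FTerm F) : Option (FTerm F) :=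
  us.foldlM (fun acc p => replaceAt acc p u) M

end FTerm

open FTerm

variable {F : Type u}

/-- A term rewriting system is a set of rules `L → R` where `L` is not a variable
and all variables of `R` occur in `L`. -/
def IsTRS (R : Set (FTerm F × FTerm F)) : Prop :=
  ∀ l r, (l, r) ∈ R → (∀ n, l ≠ .var n) ∧ ∀ n ∈ fvars r, n ∈ fvars l

/-- One rewrite step: a redex (an instance of a left-hand side) at some occurrence
is replaced by the corresponding instance of the right-hand side. -/
def RStep (R : Set (FTerm F × FTerm F)) (M N : FTerm F) : Prop :=
  ∃ l r, (l, r) ∈ R ∧ ∃ (p : List ℕ) (s : ℕ → FTerm F),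
    subtermAt M p = some (applySubst s l) ∧ replaceAt M p (applySubst s r) = some N

/-- `→*` for a TRS. -/
def RSteps (R : Set (FTerm F × FTerm F)) : FTerm F → FTerm F → Prop :=
  Relation.ReflTransGen (RStep R)

/-- `P ↓ Q`: `P` and `Q` have a common reduct. -/
def Joinable (R : Set (FTerm F × FTerm F)) (P Q : FTerm F) : Prop :=
  ∃ S, RSteps R P S ∧ RSteps R Q S

/-- Local confluence of `→_R` on a set `T` of terms. -/
def LocallyConfluentOn (R : Set (FTerm F × FTerm F)) (T : Set (FTerm F)) : Prop :=
  ∀ M ∈ T, ∀ N P, RStep R M N → RStep R M P → Joinable R N P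

/-- A renamed variant of a rule of `R` (variables renamed injectively). -/
def IsVariant (R : Set (FTerm F × FTerm F)) (lr : FTerm F × FTerm F) : Prop :=
  ∃ l r, (l, r) ∈ R ∧ ∃ ρ : ℕ → ℕ, Function.Injective ρ ∧
    lr.1 = applySubst (fun n => .var (ρ n)) l ∧ lr.2 = applySubst (fun n => .var (ρ n)) r

/-- `s` unifies `t` and `u`. -/
def Unifies (s : ℕ → FTerm F) (t u : FTerm F) : Prop := applySubst s t = applySubst s u

/-- `s` is a most general unifier of `t` and `u`. -/
def IsMGU (s : ℕ → FTerm F) (t u : FTerm F) : Prop :=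
  Unifies s t u ∧ ∀ s' : ℕ → FTerm F, Unifies s' t u →
    ∃ δ : ℕ → FTerm F, ∀ n, s' n = applySubst δ (s n)

/-- `(P, Q)` is a critical pair of `R` with overlap `O`: it is determined by the
superposition of a (renamed) rule `S → T'` on a (renamed) rule `L → R'` (with
disjoint variable sets) at a non-variable occurrence `u` of `L`, using a most
general unifier `μ` of `L/u` and `S`; then `O = μL`, `P = (μL)[u ← μT']` and
`Q = μR'`. -/
def CriticalPair (R : Set (FTerm F × FTerm F)) (P Q O : FTerm F) : Prop :=
  ∃ S T' L R', IsVariant R (S, T') ∧ IsVariant R (L, R') ∧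
    (∀ n ∈ fvars S, ∀ m ∈ fvars L, n ≠ m) ∧
    ∃ (u : List ℕ) (L' : FTerm F), subtermAt L u = some L' ∧ (∀ n, L' ≠ .var n) ∧
    ∃ μ : ℕ → FTerm F, IsMGU μ L' S ∧
      O = applySubst μ L ∧
      replaceAt (applySubst μ L) u (applySubst μ T') = some P ∧
      Q = applySubst μ R'

/-- A set `T` of terms is `→_R`-complete: closed under reduction, closed under
subterms, and for every set of occurrences of a common subterm in `M ∈ T` there
is a fresh variable whose simultaneous replacement stays in `T`. -/
def RComplete (R : Set (FTerm F × FTerm F)) (T : Set (FTerm F)) : Prop :=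
  (∀ M ∈ T, ∀ N, RStep R M N → N ∈ T) ∧
  (∀ M ∈ T, ∀ (p : List ℕ) (t : FTerm F), subtermAt M p = some t → t ∈ T) ∧
  (∀ M ∈ T, ∀ (N : FTerm F) (us : List (List ℕ)),
    (∀ u ∈ us, subtermAt M u = some N) →
    ∃ x : ℕ, x ∉ fvars M ∧ ∀ M', replaceList M us (.var x) = some M' → M' ∈ T)

/-!
Huet's argument. Two redexes of `M ∈ T` are either disjoint, and the two steps commute, or
one lies inside the other, say the inner one inside `σl` for a rule `l → r`. If the inner redex
sits below a variable `x` of `l`, rewriting every copy of `σx` closes the peak. Otherwise the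
inner left-hand side unifies with a non-variable subterm of `l`, so the peak is an instance
`τ(P, Q)` of a critical pair with overlap `μl`, for a most general unifier `μ`. The instance
`τ(μl) = σl` is a subterm of `M`, hence lies in `T`; generalizing in turn the occurrences of each
`τ y`, `y ∈ fvars (μl)`, by a fresh variable (clause (3) of completeness) shows that a renaming of
`μl` lies in `T`, and composing `μ` with that renaming keeps it most general. So `P ↓ Q`, and
this is transported to the peak by `τ` and the context. Conversely, the overlap of a critical
pair rewrites to both of its components.
-/

theorem _root_.List.getElem?_set_of_getElem? {α : Type*} {l : List α} {i : ℕ} {a b : α}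
    (h : l[i]? = some a) : (l.set i b)[i]? = some b :=
  List.getElem?_set_self (List.getElem?_eq_some_iff.1 h).1

theorem _root_.List.map_eq_map_iff_of_length_eq {α β : Type*} {g : α → β} {as bs : List α}
    (hlen : as.length = bs.length) : as.map g = bs.map g ↔ ∀ e ∈ as.zip bs, g e.1 = g e.2 := by
  rw [← List.forall₂_eq_eq_eq, List.forall₂_map_left_iff, List.forall₂_map_right_iff,
    List.forall₂_iff_zip]
  simp [hlen]

theorem _root_.Set.InjOn.exists_perm_eqOn {α : Type*} {s : Set α} {ρ : α → α}
    (hρ : Set.InjOn ρ s) (hs : s.Finite) : ∃ π : Equiv.Perm α, Set.EqOn π ρ s := by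
  classical
  have : Finite {a | a ∈ s} := hs.to_subtype
  refine ⟨(Equiv.Set.imageOfInjOn ρ s hρ).extendSubtype, fun a ha => ?_⟩
  rw [Equiv.extendSubtype_apply_of_mem _ a ha]
  rfl

theorem position_trichotomy {α : Type*} (p q : List α) :
    (∃ r, q = p ++ r) ∨ (∃ r, p = q ++ r) ∨
      ∃ c i j p' q', i ≠ j ∧ p = c ++ i :: p' ∧ q = c ++ j :: q' := by
  induction p generalizing q with
  | nil => exact Or.inl ⟨q, rfl⟩
  | cons i p ih =>
    cases q with
    | nil => exact Or.inr (Or.inl ⟨i :: p, rfl⟩)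
    | cons j q =>
      by_cases hij : i = j
      · subst hij
        rcases ih q with ⟨r, rfl⟩ | ⟨r, rfl⟩ | ⟨c, a, b, p', q', hab, rfl, rfl⟩
        · exact Or.inl ⟨r, rfl⟩
        · exact Or.inr (Or.inl ⟨r, rfl⟩)
        · exact Or.inr (Or.inr ⟨i :: c, a, b, p', q', hab, rfl, rfl⟩)
      · exact Or.inr (Or.inr ⟨[], i, j, p, q, hij, rfl, rfl⟩)

namespace FTerm

@[induction_eliminator]
theorem induction {motive : FTerm F → Prop} (var : ∀ n, motive (.var n))
    (fn : ∀ f as, (∀ a ∈ as, motive a) → motive (.fn f as)) : ∀ t, motive t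
  | .var n => var n
  | .fn f as => fn f as fun a _ => induction var fn a
decreasing_by
  have := List.sizeOf_lt_of_mem ‹a ∈ as›
  simp only [FTerm.fn.sizeOf_spec]
  omega

@[simp] theorem applySubst_var (s : ℕ → FTerm F) (n : ℕ) : applySubst s (var n) = s n := by
  rw [applySubst]

@[simp] theorem applySubst_fn (s : ℕ → FTerm F) (f : F) (as : List (FTerm F)) :
    applySubst s (fn f as) = fn f (as.map (applySubst s)) := by
  rw [applySubst, List.attach_map_val (f := applySubst s)]

@[simp] theorem fvars_var (n : ℕ) : fvars (var n : FTerm F) = {n} := by rw [fvars]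

@[simp] theorem mem_fvars_fn {m : ℕ} {f : F} {as : List (FTerm F)} :
    m ∈ fvars (fn f as) ↔ ∃ a ∈ as, m ∈ fvars a := by
  rw [fvars]
  simp

theorem applySubst_congr {s s' : ℕ → FTerm F} {t : FTerm F} (h : ∀ n ∈ fvars t, s n = s' n) :
    applySubst s t = applySubst s' t := by
  induction t with
  | var n => simpa using h n
  | fn f as ih =>
    simp only [applySubst_fn, fn.injEq, true_and]
    exact List.map_congr_left fun a ha => ih a ha fun n hn => h n (mem_fvars_fn.2 ⟨a, ha, hn⟩)

theorem applySubst_applySubst (s₂ s₁ : ℕ → FTerm F) (t : FTerm F) :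
    applySubst s₂ (applySubst s₁ t) = applySubst (fun n => applySubst s₂ (s₁ n)) t := by
  induction t with
  | var n => simp
  | fn f as ih => simpa using List.map_congr_left ih

@[simp] theorem applySubst_id (t : FTerm F) : applySubst var t = t := by
  induction t with
  | var n => simp
  | fn f as ih => simpa using List.map_congr_left ih

theorem mem_fvars_applySubst {m : ℕ} {s : ℕ → FTerm F} {t : FTerm F} :
    m ∈ fvars (applySubst s t) ↔ ∃ n ∈ fvars t, m ∈ fvars (s n) := by
  induction t with
  | var n => simp
  | fn f as ih =>
    simp only [applySubst_fn, mem_fvars_fn, List.mem_map]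
    constructor
    · rintro ⟨_, ⟨a, ha, rfl⟩, hm⟩
      obtain ⟨n, hn, hm⟩ := (ih a ha).1 hm
      exact ⟨n, ⟨a, ha, hn⟩, hm⟩
    · rintro ⟨n, ⟨a, ha, hn⟩, hm⟩
      exact ⟨_, ⟨a, ha, rfl⟩, (ih a ha).2 ⟨n, hn, hm⟩⟩

theorem finite_fvars (t : FTerm F) : (fvars t).Finite := by
  induction t with
  | var n => simp
  | fn f as ih =>
    have : fvars (fn f as) = ⋃ a ∈ as, fvars a := by ext; simp
    rw [this]
    exact as.finite_toSet.biUnion ih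

theorem sizeOf_le_sizeOf_applySubst {x : ℕ} (θ : ℕ → FTerm F) {t : FTerm F} (hx : x ∈ fvars t) :
    sizeOf (θ x) ≤ sizeOf (applySubst θ t) := by
  induction t with
  | var n => simp_all
  | fn f as ih =>
    obtain ⟨a, ha, hxa⟩ := mem_fvars_fn.1 hx
    have := List.sizeOf_lt_of_mem (List.mem_map_of_mem (f := applySubst θ) ha)
    simp only [applySubst_fn, fn.sizeOf_spec]
    linarith [ih a ha hxa]

theorem applySubst_ne_of_mem_fvars {x : ℕ} {u : FTerm F} (hx : x ∈ fvars u) (hu : u ≠ var x)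
    (θ : ℕ → FTerm F) : θ x ≠ applySubst θ u := by
  cases u with
  | var y => simp_all
  | fn f as =>
    obtain ⟨a, ha, hxa⟩ := mem_fvars_fn.1 hx
    have := List.sizeOf_lt_of_mem (List.mem_map_of_mem (f := applySubst θ) ha)
    have := sizeOf_le_sizeOf_applySubst θ hxa
    intro h
    have := congrArg sizeOf h
    simp only [applySubst_fn, fn.sizeOf_spec] at this
    omega

def singleSubst (x : ℕ) (u : FTerm F) : ℕ → FTerm F := Function.update var x u

@[simp] theorem singleSubst_self (x : ℕ) (u : FTerm F) : singleSubst x u x = u :=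
  Function.update_self ..

theorem singleSubst_of_ne {x n : ℕ} (h : n ≠ x) (u : FTerm F) : singleSubst x u n = var n :=
  Function.update_of_ne h ..

theorem applySubst_singleSubst_of_not_mem {x : ℕ} {u w : FTerm F} (hx : x ∉ fvars w) :
    applySubst (singleSubst x u) w = w := by
  conv_rhs => rw [← applySubst_id w]
  exact applySubst_congr fun n hn => singleSubst_of_ne (ne_of_mem_of_not_mem hn hx) u

theorem applySubst_applySubst_singleSubst {x : ℕ} {u : FTerm F} {θ : ℕ → FTerm F}
    (hθ : θ x = applySubst θ u) (w : FTerm F) :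
    applySubst θ (applySubst (singleSubst x u) w) = applySubst θ w := by
  rw [applySubst_applySubst]
  refine applySubst_congr fun n _ => ?_
  rcases eq_or_ne n x with rfl | hn
  · simp [hθ]
  · simp [singleSubst_of_ne hn]

theorem mem_fvars_applySubst_singleSubst {x m : ℕ} {u w : FTerm F}
    (hm : m ∈ fvars (applySubst (singleSubst x u) w)) :
    (m ∈ fvars w ∧ m ≠ x) ∨ m ∈ fvars u := by
  obtain ⟨n, hn, hmn⟩ := mem_fvars_applySubst.1 hm
  rcases eq_or_ne n x with rfl | hnx
  · simp_all
  · simp only [singleSubst_of_ne hnx, fvars_var, Set.mem_singleton_iff] at hmn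
    exact Or.inl ⟨hmn ▸ hn, hmn ▸ hnx⟩

/-! ### Positions -/

@[simp] theorem subtermAt_nil (t : FTerm F) : subtermAt t [] = some t := by rw [subtermAt]

@[simp] theorem replaceAt_nil (t u : FTerm F) : replaceAt t [] u = some u := by rw [replaceAt]

@[simp] theorem subtermAt_var_cons (n i : ℕ) (p : List ℕ) :
    subtermAt (var n : FTerm F) (i :: p) = none := by rw [subtermAt]

@[simp] theorem replaceAt_var_cons (n i : ℕ) (p : List ℕ) (u : FTerm F) :
    replaceAt (var n) (i :: p) u = none := by rw [replaceAt]

theorem subtermAt_fn_cons (f : F) (as : List (FTerm F)) (i : ℕ) (p : List ℕ) :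
    subtermAt (fn f as) (i :: p) = as[i]?.bind (subtermAt · p) := by
  rw [subtermAt]
  split <;> simp_all

theorem replaceAt_fn_cons (f : F) (as : List (FTerm F)) (i : ℕ) (p : List ℕ) (u : FTerm F) :
    replaceAt (fn f as) (i :: p) u =
      as[i]?.bind fun a => (replaceAt a p u).map fun a' => fn f (as.set i a') := by
  rw [replaceAt]
  split <;> simp_all

theorem subtermAt_fn_cons_eq_some {f : F} {as : List (FTerm F)} {i : ℕ} {p : List ℕ}
    {t : FTerm F} :
    subtermAt (fn f as) (i :: p) = some t ↔ ∃ a, as[i]? = some a ∧ subtermAt a p = some t := by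
  rw [subtermAt_fn_cons, Option.bind_eq_some_iff]

theorem replaceAt_fn_cons_eq_some {f : F} {as : List (FTerm F)} {i : ℕ} {p : List ℕ}
    {u N : FTerm F} :
    replaceAt (fn f as) (i :: p) u = some N ↔
      ∃ a, as[i]? = some a ∧ ∃ a', replaceAt a p u = some a' ∧ fn f (as.set i a') = N := by
  rw [replaceAt_fn_cons, Option.bind_eq_some_iff]
  simp only [Option.map_eq_some_iff]

theorem subtermAt_append (M : FTerm F) (p q : List ℕ) :
    subtermAt M (p ++ q) = (subtermAt M p).bind (subtermAt · q) := by
  induction p generalizing M with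
  | nil => simp
  | cons i p ih =>
    cases M with
    | var n => simp
    | fn f as => cases h : as[i]? <;> simp [subtermAt_fn_cons, h, ih]

theorem replaceAt_append (M : FTerm F) (p q : List ℕ) (u : FTerm F) :
    replaceAt M (p ++ q) u =
      (subtermAt M p).bind fun A => (replaceAt A q u).bind (replaceAt M p) := by
  induction p generalizing M with
  | nil => cases replaceAt M q u <;> simp
  | cons i p ih =>
    cases M with
    | var n => simp
    | fn f as =>
      cases h : as[i]? with
      | none => simp [replaceAt_fn_cons, subtermAt_fn_cons, h]
      | some a =>
        simp only [List.cons_append, replaceAt_fn_cons, subtermAt_fn_cons, h, Option.bind_some, ih]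
        cases subtermAt a p <;> simp only [Option.bind_none, Option.map_none, Option.bind_some]
        cases replaceAt _ q u <;> simp

theorem exists_replaceAt {M A : FTerm F} {p : List ℕ} (h : subtermAt M p = some A) (u : FTerm F) :
    ∃ N, replaceAt M p u = some N := by
  induction p generalizing M with
  | nil => simp
  | cons i p ih =>
    cases M with
    | var n => simp at h
    | fn f as =>
      obtain ⟨a, ha, hap⟩ := subtermAt_fn_cons_eq_some.1 h
      obtain ⟨a', ha'⟩ := ih hap
      exact ⟨_, replaceAt_fn_cons_eq_some.2 ⟨a, ha, a', ha', rfl⟩⟩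

theorem subtermAt_of_replaceAt {M N u : FTerm F} {p : List ℕ} (h : replaceAt M p u = some N) :
    subtermAt N p = some u := by
  induction p generalizing M N with
  | nil => simp_all
  | cons i p ih =>
    cases M with
    | var n => simp at h
    | fn f as =>
      obtain ⟨a, ha, a', ha', rfl⟩ := replaceAt_fn_cons_eq_some.1 h
      exact subtermAt_fn_cons_eq_some.2 ⟨a', List.getElem?_set_of_getElem? ha, ih ha'⟩

theorem replaceAt_of_replaceAt {M N A : FTerm F} {p : List ℕ} (h : replaceAt M p A = some N)
    (B : FTerm F) : replaceAt N p B = replaceAt M p B := by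
  induction p generalizing M N with
  | nil => simp
  | cons i p ih =>
    cases M with
    | var n => simp at h
    | fn f as =>
      obtain ⟨a, ha, a', ha', rfl⟩ := replaceAt_fn_cons_eq_some.1 h
      simp [replaceAt_fn_cons, ha, List.getElem?_set_of_getElem? ha, ih ha']

theorem replaceAt_self_of_subtermAt {M A : FTerm F} {p : List ℕ} (h : subtermAt M p = some A) :
    replaceAt M p A = some M := by
  induction p generalizing M with
  | nil => simp_all
  | cons i p ih =>
    cases M with
    | var n => simp at h
    | fn f as =>
      obtain ⟨a, ha, hap⟩ := subtermAt_fn_cons_eq_some.1 h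
      obtain ⟨hi, rfl⟩ := List.getElem?_eq_some_iff.1 ha
      exact replaceAt_fn_cons_eq_some.2 ⟨_, ha, _, ih hap, by rw [List.set_getElem_self]⟩

theorem subtermAt_applySubst {M t : FTerm F} {p : List ℕ} (s : ℕ → FTerm F)
    (h : subtermAt M p = some t) : subtermAt (applySubst s M) p = some (applySubst s t) := by
  induction p generalizing M with
  | nil => simp_all
  | cons i p ih =>
    cases M with
    | var n => simp at h
    | fn f as =>
      obtain ⟨a, ha, hap⟩ := subtermAt_fn_cons_eq_some.1 h
      simp [subtermAt_fn_cons, ha, ih hap]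

theorem replaceAt_applySubst {M N u : FTerm F} {p : List ℕ} (s : ℕ → FTerm F)
    (h : replaceAt M p u = some N) :
    replaceAt (applySubst s M) p (applySubst s u) = some (applySubst s N) := by
  induction p generalizing M N with
  | nil => simp_all
  | cons i p ih =>
    cases M with
    | var n => simp at h
    | fn f as =>
      obtain ⟨a, ha, a', ha', rfl⟩ := replaceAt_fn_cons_eq_some.1 h
      simp [replaceAt_fn_cons, ha, ih ha', List.map_set]

theorem eq_applySubst_of_replaceAt_fresh {l l₀ W t : FTerm F} {q : List ℕ} {z : ℕ}
    {s : ℕ → FTerm F} (hz : z ∉ fvars l) (hl₀ : replaceAt l q (var z) = some l₀)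
    (hW : replaceAt (applySubst s l) q t = some W) : W = applySubst (Function.update s z t) l₀ := by
  have := replaceAt_applySubst (Function.update s z t) hl₀
  rwa [applySubst_congr fun n hn => Function.update_of_ne (ne_of_mem_of_not_mem hn hz) t s,
    applySubst_var, Function.update_self, hW, Option.some_inj] at this

theorem subtermAt_replaceAt_of_ne {M N u : FTerm F} {c p q : List ℕ} {i j : ℕ} (hij : i ≠ j)
    (h : replaceAt M (c ++ i :: p) u = some N) :
    subtermAt N (c ++ j :: q) = subtermAt M (c ++ j :: q) := by
  induction c generalizing M N with
  | nil =>
    cases M with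
    | var n => simp at h
    | fn f as =>
      obtain ⟨a, ha, a', ha', rfl⟩ := replaceAt_fn_cons_eq_some.1 h
      simp [subtermAt_fn_cons, List.getElem?_set_ne hij]
  | cons k c ih =>
    cases M with
    | var n => simp at h
    | fn f as =>
      obtain ⟨a, ha, a', ha', rfl⟩ := replaceAt_fn_cons_eq_some.1 h
      simp [subtermAt_fn_cons, List.getElem?_set_of_getElem? ha, ha, ih ha']

theorem replaceAt_comm_of_ne {M N P u v : FTerm F} {c p q : List ℕ} {i j : ℕ} (hij : i ≠ j)
    (hN : replaceAt M (c ++ i :: p) u = some N) (hP : replaceAt M (c ++ j :: q) v = some P) :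
    ∃ Q, replaceAt N (c ++ j :: q) v = some Q ∧ replaceAt P (c ++ i :: p) u = some Q := by
  induction c generalizing M N P with
  | nil =>
    cases M with
    | var n => simp at hN
    | fn f as =>
      obtain ⟨a, ha, a', ha', rfl⟩ := replaceAt_fn_cons_eq_some.1 hN
      obtain ⟨b, hb, b', hb', rfl⟩ := replaceAt_fn_cons_eq_some.1 hP
      refine ⟨fn f ((as.set i a').set j b'), ?_, ?_⟩
      · simp [replaceAt_fn_cons, List.getElem?_set_ne hij, hb, hb']
      · simp [replaceAt_fn_cons, List.getElem?_set_ne (Ne.symm hij), ha, ha',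
          List.set_comm _ _ hij]
  | cons k c ih =>
    cases M with
    | var n => simp at hN
    | fn f as =>
      obtain ⟨a, ha, a₁, ha₁, rfl⟩ := replaceAt_fn_cons_eq_some.1 hN
      obtain ⟨_, ha₂', a₂, ha₂, rfl⟩ := replaceAt_fn_cons_eq_some.1 hP
      obtain rfl : a = _ := Option.some_injective _ (ha.symm.trans ha₂')
      obtain ⟨Q, hQ₁, hQ₂⟩ := ih ha₁ ha₂
      refine ⟨fn f (as.set k Q), ?_, ?_⟩ <;>
        simp [replaceAt_fn_cons, List.getElem?_set_of_getElem? ha, hQ₁, hQ₂]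

theorem subtermAt_applySubst_cases {L t : FTerm F} {s : ℕ → FTerm F} {p : List ℕ}
    (h : subtermAt (applySubst s L) p = some t) :
    (∃ L', subtermAt L p = some L' ∧ (∀ n, L' ≠ var n) ∧ t = applySubst s L') ∨
      ∃ p₁ x p₂, p = p₁ ++ p₂ ∧ subtermAt L p₁ = some (var x) ∧ subtermAt (s x) p₂ = some t := by
  induction p generalizing L with
  | nil =>
    cases L with
    | var x => exact Or.inr ⟨[], x, [], rfl, subtermAt_nil _, by simpa using h⟩
    | fn f as => exact Or.inl ⟨fn f as, subtermAt_nil _, fun _ => nofun, by simpa using h.symm⟩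
  | cons i p ih =>
    cases L with
    | var x => exact Or.inr ⟨[], x, i :: p, rfl, subtermAt_nil _, by simpa using h⟩
    | fn f as =>
      rw [applySubst_fn] at h
      obtain ⟨_, hi, hp⟩ := subtermAt_fn_cons_eq_some.1 h
      obtain ⟨a, ha, rfl⟩ := Option.map_eq_some_iff.1 (List.getElem?_map .. ▸ hi)
      rcases ih hp with ⟨L', hL', hvar, rfl⟩ | ⟨p₁, x, p₂, rfl, hx, ht⟩
      · exact Or.inl ⟨L', subtermAt_fn_cons_eq_some.2 ⟨a, ha, hL'⟩, hvar, rfl⟩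
      · exact Or.inr ⟨i :: p₁, x, p₂, rfl, subtermAt_fn_cons_eq_some.2 ⟨a, ha, hx⟩, ht⟩

theorem replaceList_nil (M v : FTerm F) : replaceList M [] v = some M := rfl

theorem replaceList_cons (M v : FTerm F) (u : List ℕ) (us : List (List ℕ)) :
    replaceList M (u :: us) v = (replaceAt M u v).bind (replaceList · us v) := by
  simp [replaceList]

theorem replaceList_append (M v : FTerm F) (us us' : List (List ℕ)) :
    replaceList M (us ++ us') v = (replaceList M us v).bind (replaceList · us' v) := by
  simp [replaceList, List.foldlM_append]

theorem replaceList_context {v A A' M M' : FTerm F} {us : List (List ℕ)} {p : List ℕ}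
    (hA : replaceList A us v = some A') (hM : subtermAt M p = some A)
    (hM' : replaceAt M p A' = some M') : replaceList M (us.map (p ++ ·)) v = some M' := by
  induction us generalizing A M with
  | nil =>
    rw [replaceList_nil, Option.some_inj] at hA
    subst hA
    rw [replaceAt_self_of_subtermAt hM, Option.some_inj] at hM'
    exact hM' ▸ replaceList_nil M v
  | cons u us ih =>
    rw [replaceList_cons] at hA
    obtain ⟨A₁, hA₁, hA⟩ := Option.bind_eq_some_iff.1 hA
    obtain ⟨M₁, hM₁⟩ := exists_replaceAt hM A₁
    have hpu : replaceAt M (p ++ u) v = some M₁ := by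
      rw [replaceAt_append, hM, Option.bind_some, hA₁, Option.bind_some, hM₁]
    rw [List.map_cons, replaceList_cons, hpu, Option.bind_some]
    exact ih hA (subtermAt_of_replaceAt hM₁) (by rw [replaceAt_of_replaceAt hM₁, hM'])

theorem exists_occurrences_var (x : ℕ) (O : FTerm F) :
    ∃ us : List (List ℕ), (∀ u ∈ us, subtermAt O u = some (var x)) ∧
      ∀ σ v, replaceList (applySubst σ O) us v = some (applySubst (Function.update σ x v) O) := by
  induction O with
  | var n =>
    by_cases hn : n = x
    · subst hn
      exact ⟨[[]], by simp, fun σ v => by simp [replaceList_cons, replaceList_nil]⟩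
    · exact ⟨[], by simp, fun σ v => by simp [replaceList_nil, hn]⟩
  | fn f as ih =>
    -- children are handled left to right; `pre` stands for the ones already processed, and
    -- only its length `k` enters the positions
    suffices ∀ bs, (∀ b ∈ bs, b ∈ as) → ∀ k, ∃ us : List (List ℕ),
        (∀ pre : List (FTerm F), pre.length = k → ∀ u ∈ us,
          subtermAt (fn f (pre ++ bs)) u = some (var x)) ∧
        ∀ σ v (pre : List (FTerm F)), pre.length = k →
          replaceList (fn f (pre ++ bs.map (applySubst σ))) us v =
            some (fn f (pre ++ bs.map (applySubst (Function.update σ x v)))) by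
      obtain ⟨us, hpos, hrepl⟩ := this as (fun _ => id) 0
      exact ⟨us, hpos [] rfl, fun σ v => by simpa using hrepl σ v [] rfl⟩
    intro bs hbs
    induction bs with
    | nil => exact fun _ => ⟨[], by simp, fun _ _ _ _ => replaceList_nil _ _⟩
    | cons b bs ihbs =>
      intro k
      obtain ⟨usb, hposb, hreplb⟩ := ih b (hbs b (by simp))
      obtain ⟨us, hpos, hrepl⟩ := ihbs (fun c hc => hbs c (by simp [hc])) (k + 1)
      refine ⟨usb.map ([k] ++ ·) ++ us, fun pre hpre u hu => ?_, fun σ v pre hpre => ?_⟩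
      · rcases List.mem_append.1 hu with hu | hu
        · obtain ⟨q, hq, rfl⟩ := List.mem_map.1 hu
          simpa [subtermAt_fn_cons, ← hpre] using hposb q hq
        · simpa using hpos (pre ++ [b]) (by simp [hpre]) u hu
      · rw [replaceList_append, replaceList_context (hreplb σ v) (p := [k])
          (M' := fn f (pre ++ applySubst (Function.update σ x v) b :: bs.map (applySubst σ)))
          (by simp [subtermAt_fn_cons, ← hpre]) (by simp [replaceAt_fn_cons, ← hpre]),
          Option.bind_some]
        simpa using hrepl σ v (pre ++ [applySubst (Function.update σ x v) b]) (by simp [hpre])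

end FTerm

variable {R : Set (FTerm F × FTerm F)}

theorem RStep.context {M MB A B : FTerm F} {p : List ℕ} (st : RStep R A B)
    (hA : subtermAt M p = some A) (hB : replaceAt M p B = some MB) : RStep R M MB := by
  obtain ⟨l, r, hlr, p', s, h₁, h₂⟩ := st
  refine ⟨l, r, hlr, p ++ p', s, ?_, ?_⟩
  · rw [subtermAt_append, hA, Option.bind_some, h₁]
  · rw [replaceAt_append, hA, Option.bind_some, h₂, Option.bind_some, hB]

theorem RSteps.context {M MB A B : FTerm F} {p : List ℕ} (st : RSteps R A B)
    (hA : subtermAt M p = some A) (hB : replaceAt M p B = some MB) : RSteps R M MB := by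
  induction st generalizing MB with
  | refl =>
    rw [replaceAt_self_of_subtermAt hA, Option.some_inj] at hB
    exact hB ▸ .refl
  | @tail C D _ hCD ih =>
    obtain ⟨MC, hMC⟩ := exists_replaceAt hA C
    exact .tail (ih hMC) (hCD.context (subtermAt_of_replaceAt hMC)
      (by rw [replaceAt_of_replaceAt hMC, hB]))

theorem RStep.subst {M N : FTerm F} (σ : ℕ → FTerm F) (st : RStep R M N) :
    RStep R (applySubst σ M) (applySubst σ N) := by
  obtain ⟨l, r, hlr, p, s, h₁, h₂⟩ := st
  refine ⟨l, r, hlr, p, fun n => FTerm.applySubst σ (s n), ?_, ?_⟩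
  · rw [← applySubst_applySubst]
    exact subtermAt_applySubst σ h₁
  · rw [← applySubst_applySubst]
    exact replaceAt_applySubst σ h₂

theorem RSteps.subst {M N : FTerm F} (σ : ℕ → FTerm F) (st : RSteps R M N) :
    RSteps R (applySubst σ M) (applySubst σ N) :=
  Relation.ReflTransGen.lift (FTerm.applySubst σ) (fun _ _ => RStep.subst σ) _ _ st

theorem Joinable.symm {P Q : FTerm F} (h : Joinable R P Q) : Joinable R Q P :=
  let ⟨S, hP, hQ⟩ := h
  ⟨S, hQ, hP⟩

theorem Joinable.subst {M N : FTerm F} (σ : ℕ → FTerm F) (h : Joinable R M N) :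
    Joinable R (applySubst σ M) (applySubst σ N) :=
  let ⟨S, hM, hN⟩ := h
  ⟨FTerm.applySubst σ S, hM.subst σ, hN.subst σ⟩

theorem Joinable.context {M MA MB A B : FTerm F} {p : List ℕ} (h : Joinable R A B)
    (hA : replaceAt M p A = some MA) (hB : replaceAt M p B = some MB) : Joinable R MA MB := by
  obtain ⟨S, hAS, hBS⟩ := h
  obtain ⟨MS, hMS⟩ := exists_replaceAt (subtermAt_of_replaceAt hA) S
  refine ⟨MS, hAS.context (subtermAt_of_replaceAt hA) hMS,
    hBS.context (subtermAt_of_replaceAt hB) ?_⟩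
  rw [replaceAt_of_replaceAt hB, ← replaceAt_of_replaceAt hA, hMS]

theorem RSteps.fn_set {f : F} {as : List (FTerm F)} {i : ℕ} {a b : FTerm F}
    (h : RSteps R a b) (ha : as[i]? = some a) : RSteps R (fn f as) (fn f (as.set i b)) :=
  h.context (p := [i]) (subtermAt_fn_cons_eq_some.2 ⟨a, ha, subtermAt_nil a⟩)
    (replaceAt_fn_cons_eq_some.2 ⟨a, ha, b, replaceAt_nil a b, rfl⟩)

theorem RSteps.fn_congr {f : F} {as bs : List (FTerm F)} (h : List.Forall₂ (RSteps R) as bs) :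
    RSteps R (fn f as) (fn f bs) := by
  suffices ∀ pre, RSteps R (.fn f (pre ++ as)) (.fn f (pre ++ bs)) by simpa using this []
  induction h with
  | nil => exact fun _ => .refl
  | @cons a b as bs hab _ ih =>
    intro pre
    have hstep := hab.fn_set (f := f) (as := pre ++ a :: as) (i := pre.length) (by simp)
    rw [List.set_append, if_neg (lt_irrefl _), Nat.sub_self, List.set_cons_zero] at hstep
    have hrest : RSteps R (.fn f (pre ++ b :: as)) (.fn f (pre ++ b :: bs)) := by
      simpa using ih (pre ++ [b])
    exact Relation.ReflTransGen.trans hstep hrest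

theorem RSteps.applySubst_of_forall {s s' : ℕ → FTerm F} {l : FTerm F}
    (h : ∀ n ∈ fvars l, RSteps R (s n) (s' n)) :
    RSteps R (applySubst s l) (applySubst s' l) := by
  induction l with
  | var n => simpa using h n
  | fn f as ih =>
    simp only [applySubst_fn]
    refine RSteps.fn_congr (List.forall₂_map_left_iff.2 (List.forall₂_map_right_iff.2
      (List.forall₂_same.2 fun a ha => ih a ha fun n hn => h n (mem_fvars_fn.2 ⟨a, ha, hn⟩))))

theorem RSteps.of_replaceAt_var {l W t : FTerm F} {q : List ℕ} {x : ℕ} {s : ℕ → FTerm F}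
    (hx : RSteps R (s x) t) (hq : subtermAt l q = some (var x))
    (hW : replaceAt (applySubst s l) q t = some W) :
    RSteps R W (applySubst (Function.update s x t) l) := by
  -- both sides are instances of `l` with the occurrence of `x` at `q` renamed to a fresh `z`
  obtain ⟨z, hzl⟩ := (finite_fvars l).infinite_compl.nonempty
  obtain ⟨l₀, hl₀⟩ := exists_replaceAt hq (var z)
  have hqt : subtermAt (applySubst (Function.update s x t) l) q = some t := by
    simpa using subtermAt_applySubst (Function.update s x t) hq
  rw [eq_applySubst_of_replaceAt_fresh hzl hl₀ hW,
    eq_applySubst_of_replaceAt_fresh hzl hl₀ (replaceAt_self_of_subtermAt hqt)]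
  refine RSteps.applySubst_of_forall fun n _ => ?_
  rcases eq_or_ne n z with rfl | hnz
  · simp only [Function.update_self]
    exact .refl
  rcases eq_or_ne n x with rfl | hnx
  · simpa [Function.update_of_ne hnz] using hx
  · simp only [Function.update_of_ne hnz, Function.update_of_ne hnx]
    exact .refl

theorem RStep.root {l r : FTerm F} (hlr : (l, r) ∈ R) (s : ℕ → FTerm F) :
    RStep R (applySubst s l) (applySubst s r) :=
  ⟨l, r, hlr, [], s, subtermAt_nil _, replaceAt_nil _ _⟩

/-! ### Unification -/

def UnifiesAll (θ : ℕ → FTerm F) (E : List (FTerm F × FTerm F)) : Prop :=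
  ∀ e ∈ E, applySubst θ e.1 = applySubst θ e.2

def IsListMGU (μ : ℕ → FTerm F) (E : List (FTerm F × FTerm F)) : Prop :=
  UnifiesAll μ E ∧ ∀ θ, UnifiesAll θ E → ∃ δ : ℕ → FTerm F, ∀ n, θ n = applySubst δ (μ n)

def eqnVars (E : List (FTerm F × FTerm F)) : Set ℕ :=
  {n | ∃ e ∈ E, n ∈ fvars e.1 ∨ n ∈ fvars e.2}

noncomputable def eqnSize (E : List (FTerm F × FTerm F)) : ℕ :=
  (E.map fun e => sizeOf e.1 + sizeOf e.2).sum

/-- Termination measure of the Martelli–Montanari unification algorithm: eliminating a variable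
decreases the first component, decomposing or deleting an equation keeps the variables and
decreases the size. -/
noncomputable def unifMeasure (E : List (FTerm F × FTerm F)) : ℕ ×ₗ ℕ :=
  toLex ((eqnVars E).ncard, eqnSize E)

section Unification

variable {θ μ : ℕ → FTerm F} {E E' : List (FTerm F × FTerm F)}

theorem isListMGU_congr (h : ∀ θ, UnifiesAll θ E ↔ UnifiesAll θ E') :
    IsListMGU μ E ↔ IsListMGU μ E' := by
  simp only [IsListMGU, h]

theorem unifiesAll_cons {t u : FTerm F} :
    UnifiesAll θ ((t, u) :: E) ↔ applySubst θ t = applySubst θ u ∧ UnifiesAll θ E :=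
  List.forall_mem_cons

theorem unifiesAll_cons_swap {t u : FTerm F} :
    UnifiesAll θ ((t, u) :: E) ↔ UnifiesAll θ ((u, t) :: E) := by
  simp only [unifiesAll_cons, eq_comm]

theorem unifiesAll_fn_cons {f : F} {as bs : List (FTerm F)} (hlen : as.length = bs.length) :
    UnifiesAll θ ((fn f as, fn f bs) :: E) ↔ UnifiesAll θ (as.zip bs ++ E) := by
  rw [unifiesAll_cons]
  simp only [applySubst_fn, fn.injEq, true_and,
    List.map_eq_map_iff_of_length_eq hlen, UnifiesAll, List.forall_mem_append]

theorem unifiesAll_map_singleSubst {x : ℕ} {u : FTerm F} (hθ : θ x = applySubst θ u) :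
    UnifiesAll θ (E.map (Prod.map (applySubst (singleSubst x u)) (applySubst (singleSubst x u))))
      ↔ UnifiesAll θ E := by
  simp only [UnifiesAll, List.forall_mem_map, Prod.map_fst, Prod.map_snd,
    applySubst_applySubst_singleSubst hθ]

theorem isListMGU_var_cons {x : ℕ} {u : FTerm F} (hx : x ∉ fvars u)
    (hμ : IsListMGU μ
      (E.map (Prod.map (applySubst (singleSubst x u)) (applySubst (singleSubst x u))))) :
    IsListMGU (fun n => applySubst μ (singleSubst x u n)) ((var x, u) :: E) := by
  have hcomp (w : FTerm F) : applySubst (fun n => applySubst μ (singleSubst x u n)) w =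
      applySubst μ (applySubst (singleSubst x u) w) := (applySubst_applySubst ..).symm
  refine ⟨unifiesAll_cons.2 ⟨?_, fun e he => ?_⟩, fun θ hθ => ?_⟩
  · rw [hcomp, hcomp, applySubst_singleSubst_of_not_mem hx]
    simp
  · rw [hcomp, hcomp]
    exact hμ.1 _ (List.mem_map_of_mem he)
  · obtain ⟨hθx, hθE⟩ := unifiesAll_cons.1 hθ
    rw [applySubst_var] at hθx
    obtain ⟨δ, hδ⟩ := hμ.2 θ ((unifiesAll_map_singleSubst hθx).2 hθE)
    refine ⟨δ, fun n => ?_⟩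
    calc θ n = applySubst θ (singleSubst x u n) := by
          simpa using (applySubst_applySubst_singleSubst hθx (var n)).symm
      _ = applySubst δ (applySubst μ (singleSubst x u n)) := by
        rw [applySubst_applySubst]
        exact applySubst_congr fun m _ => hδ m

theorem eqnVars_cons (e : FTerm F × FTerm F) (E : List (FTerm F × FTerm F)) :
    eqnVars (e :: E) = fvars e.1 ∪ fvars e.2 ∪ eqnVars E := by
  ext n
  simp only [eqnVars, List.mem_cons, Set.mem_ofPred_eq, Set.mem_union]
  grind

theorem finite_eqnVars (E : List (FTerm F × FTerm F)) : (eqnVars E).Finite := by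
  induction E with
  | nil => simp [eqnVars]
  | cons e E ih =>
    rw [eqnVars_cons]
    exact ((finite_fvars _).union (finite_fvars _)).union ih

theorem unifMeasure_lt_of_ncard_lt (h : (eqnVars E').ncard < (eqnVars E).ncard) :
    unifMeasure E' < unifMeasure E :=
  Prod.Lex.toLex_lt_toLex.2 (Or.inl h)

theorem unifMeasure_lt_of_subset (hsub : eqnVars E' ⊆ eqnVars E) (hsize : eqnSize E' < eqnSize E) :
    unifMeasure E' < unifMeasure E := by
  rcases (Set.ncard_le_ncard hsub (finite_eqnVars E)).lt_or_eq with h | h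
  · exact unifMeasure_lt_of_ncard_lt h
  · exact Prod.Lex.toLex_lt_toLex.2 (Or.inr ⟨h, hsize⟩)

theorem unifMeasure_cons_swap (t u : FTerm F) :
    unifMeasure ((t, u) :: E) = unifMeasure ((u, t) :: E) := by
  simp only [unifMeasure, eqnVars_cons, eqnSize, List.map_cons, List.sum_cons,
    Set.union_comm (fvars t), Nat.add_comm (sizeOf t)]

theorem unifMeasure_var_self_cons (x : ℕ) :
    unifMeasure E < unifMeasure ((var x, var x) :: E) :=
  unifMeasure_lt_of_subset (by rw [eqnVars_cons]; exact Set.subset_union_right)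
    (by simp [eqnSize])

theorem unifMeasure_map_singleSubst_lt {x : ℕ} {u : FTerm F} (hx : x ∉ fvars u) :
    unifMeasure (E.map (Prod.map (applySubst (singleSubst x u)) (applySubst (singleSubst x u)))) <
      unifMeasure ((var x, u) :: E) := by
  refine unifMeasure_lt_of_ncard_lt (Set.ncard_lt_ncard ?_ (finite_eqnVars _))
  refine Set.ssubset_iff_of_subset ?_ |>.2 ⟨x, by simp [eqnVars_cons], fun hx' => ?_⟩
  · intro m hm
    obtain ⟨_, he', hm⟩ := hm
    obtain ⟨e, he, rfl⟩ := List.mem_map.1 he'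
    rw [eqnVars_cons]
    rcases hm with hm | hm <;> rcases mem_fvars_applySubst_singleSubst hm with ⟨hm, -⟩ | hm
    all_goals first
      | exact Or.inl (Or.inr hm)
      | exact Or.inr ⟨e, he, by simp [hm]⟩
  · obtain ⟨_, he', hm⟩ := hx'
    obtain ⟨e, he, rfl⟩ := List.mem_map.1 he'
    rcases hm with hm | hm <;> rcases mem_fvars_applySubst_singleSubst hm with ⟨-, hne⟩ | hm
    all_goals first
      | exact hne rfl
      | exact hx hm

theorem eqnSize_zip_lt (as bs : List (FTerm F)) : eqnSize (as.zip bs) < sizeOf as + sizeOf bs := by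
  induction as generalizing bs with
  | nil => simp [eqnSize]
  | cons a as ih =>
    cases bs with
    | nil => simp [eqnSize]
    | cons b bs =>
      have := ih bs
      simp only [eqnSize, List.zip_cons_cons, List.map_cons, List.sum_cons,
        List.cons.sizeOf_spec] at this ⊢
      omega

theorem unifMeasure_zip_lt {f : F} {as bs : List (FTerm F)} :
    unifMeasure (as.zip bs ++ E) < unifMeasure ((fn f as, fn f bs) :: E) := by
  refine unifMeasure_lt_of_subset ?_ ?_
  · rintro n ⟨e, he, hn⟩
    rw [eqnVars_cons]
    rcases List.mem_append.1 he with he | he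
    · obtain ⟨ha, hb⟩ := List.of_mem_zip he
      exact Or.inl (hn.imp (fun hn => mem_fvars_fn.2 ⟨_, ha, hn⟩)
        fun hn => mem_fvars_fn.2 ⟨_, hb, hn⟩)
    · exact Or.inr ⟨e, he, hn⟩
  · have := eqnSize_zip_lt as bs
    simp only [eqnSize, List.map_append, List.sum_append, List.map_cons, List.sum_cons,
      fn.sizeOf_spec] at this ⊢
    omega

theorem exists_isListMGU_var_cons {x : ℕ} {u : FTerm F}
    (ih : ∀ E' : List (FTerm F × FTerm F), unifMeasure E' < unifMeasure ((var x, u) :: E) →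
      (∃ θ, UnifiesAll θ E') → ∃ μ, IsListMGU μ E')
    (hθ : UnifiesAll θ ((var x, u) :: E)) : ∃ μ, IsListMGU μ ((var x, u) :: E) := by
  have hθx : θ x = applySubst θ u := by simpa using (unifiesAll_cons.1 hθ).1
  by_cases hu : u = var x
  · subst hu
    have hdrop (θ : ℕ → FTerm F) : UnifiesAll θ ((var x, var x) :: E) ↔ UnifiesAll θ E := by
      simp [unifiesAll_cons]
    obtain ⟨μ, hμ⟩ := ih E (unifMeasure_var_self_cons x) ⟨θ, (hdrop θ).1 hθ⟩
    exact ⟨μ, (isListMGU_congr hdrop).2 hμ⟩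
  by_cases hx : x ∈ fvars u
  · exact absurd hθx (applySubst_ne_of_mem_fvars hx hu θ)
  obtain ⟨μ, hμ⟩ := ih _ (unifMeasure_map_singleSubst_lt hx)
    ⟨θ, (unifiesAll_map_singleSubst hθx).2 (unifiesAll_cons.1 hθ).2⟩
  exact ⟨_, isListMGU_var_cons hx hμ⟩

theorem exists_isListMGU (E : List (FTerm F × FTerm F)) (hE : ∃ θ, UnifiesAll θ E) :
    ∃ μ, IsListMGU μ E := by
  induction E using (InvImage.wf unifMeasure wellFounded_lt).induction with
  | h E ih =>
    obtain ⟨θ, hθ⟩ := hE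
    rcases E with _ | ⟨⟨t, u⟩, E⟩
    · exact ⟨var, nofun, fun θ _ => ⟨θ, fun n => by simp⟩⟩
    cases t with
    | var x => exact exists_isListMGU_var_cons (fun E' h => ih E' h) hθ
    | fn f as =>
      cases u with
      | var x =>
        rw [unifiesAll_cons_swap] at hθ
        obtain ⟨μ, hμ⟩ := exists_isListMGU_var_cons
          (fun E' h => ih E' (by rwa [InvImage, unifMeasure_cons_swap])) hθ
        exact ⟨μ, (isListMGU_congr fun _ => unifiesAll_cons_swap).2 hμ⟩
      | fn g bs =>
        have hhead := (unifiesAll_cons.1 hθ).1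
        simp only [applySubst_fn, fn.injEq] at hhead
        obtain ⟨rfl, hmap⟩ := hhead
        have hlen : as.length = bs.length := by simpa using congrArg List.length hmap
        obtain ⟨μ, hμ⟩ := ih _ unifMeasure_zip_lt ⟨θ, (unifiesAll_fn_cons hlen).1 hθ⟩
        exact ⟨μ, (isListMGU_congr fun _ => unifiesAll_fn_cons hlen).2 hμ⟩

theorem exists_isMGU {t u : FTerm F} (h : Unifies θ t u) : ∃ μ, IsMGU μ t u := by
  have hiff (θ : ℕ → FTerm F) : UnifiesAll θ [(t, u)] ↔ Unifies θ t u := by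
    simp [UnifiesAll, Unifies]
  obtain ⟨μ, hμu, hμ⟩ := exists_isListMGU [(t, u)] ⟨θ, (hiff θ).2 h⟩
  exact ⟨μ, (hiff μ).1 hμu, fun θ hθ => hμ θ ((hiff θ).2 hθ)⟩

theorem IsMGU.comp_perm {μ : ℕ → FTerm F} {t u : FTerm F} (h : IsMGU μ t u) (π : Equiv.Perm ℕ) :
    IsMGU (fun n => applySubst (fun m => var (π m)) (μ n)) t u := by
  refine ⟨?_, fun s hs => ?_⟩
  · simp only [Unifies, ← applySubst_applySubst]
    rw [h.1]
  · obtain ⟨δ, hδ⟩ := h.2 s hs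
    refine ⟨fun m => δ (π.symm m), fun n => ?_⟩
    rw [hδ n, applySubst_applySubst]
    exact applySubst_congr fun m _ => by simp

end Unification

def ClosedUnderGeneralization (T : Set (FTerm F)) : Prop :=
  ∀ M ∈ T, ∀ (N : FTerm F) (us : List (List ℕ)), (∀ u ∈ us, subtermAt M u = some N) →
    ∃ x : ℕ, x ∉ fvars M ∧ ∀ M', replaceList M us (.var x) = some M' → M' ∈ T

theorem RComplete.subterm_mem {T : Set (FTerm F)} (hT : RComplete R T) {M t : FTerm F}
    {p : List ℕ} (hM : M ∈ T) (ht : subtermAt M p = some t) : t ∈ T :=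
  hT.2.1 M hM p t ht

theorem RComplete.closedUnderGeneralization {T : Set (FTerm F)} (hT : RComplete R T) :
    ClosedUnderGeneralization T :=
  hT.2.2

theorem ClosedUnderGeneralization.exists_injOn {T : Set (FTerm F)}
    (hT : ClosedUnderGeneralization T) {δ : ℕ → FTerm F} {O : FTerm F}
    (hO : applySubst δ O ∈ T) :
    ∃ δ', applySubst δ' O ∈ T ∧ ∃ ρ : ℕ → ℕ, Set.InjOn ρ (fvars O) ∧
      ∀ n ∈ fvars O, δ' n = var (ρ n) := by
  refine Set.Finite.induction_on_subset (motive := fun t _ => ∃ δ', applySubst δ' O ∈ T ∧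
    ∃ ρ : ℕ → ℕ, Set.InjOn ρ t ∧ ∀ n ∈ t, δ' n = var (ρ n)) _ (finite_fvars O)
    ⟨δ, hO, id, by simp, by simp⟩ ?_
  rintro a t haO htO hat ⟨δ', hδ'T, ρ, hρ, hδ'ρ⟩
  -- the copies of `δ' a` sitting at the occurrences of `a` are replaced by a fresh `y`
  obtain ⟨us, hus, hrepl⟩ := exists_occurrences_var a O
  obtain ⟨y, hy, hyT⟩ := hT _ hδ'T (δ' a) us fun u hu => by
    simpa using subtermAt_applySubst δ' (hus u hu)
  have hρt : Set.EqOn ρ (Function.update ρ a y) t := fun n hn =>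
    (Function.update_of_ne (ne_of_mem_of_not_mem hn hat) _ _).symm
  refine ⟨Function.update δ' a (var y), hyT _ (hrepl δ' (var y)), Function.update ρ a y,
    (Set.injOn_insert hat).2 ⟨hρ.congr hρt, ?_⟩, ?_⟩
  · rintro ⟨n, hn, hny⟩
    rw [← hρt hn, Function.update_self] at hny
    exact hy (mem_fvars_applySubst.2 ⟨n, htO hn, by simp [hδ'ρ n hn, hny]⟩)
  · rintro n (rfl | hn)
    · simp
    · rw [Function.update_of_ne (ne_of_mem_of_not_mem hn hat), hδ'ρ n hn, hρt hn]

theorem ClosedUnderGeneralization.exists_perm {T : Set (FTerm F)}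
    (hT : ClosedUnderGeneralization T) {δ : ℕ → FTerm F} {O : FTerm F}
    (hO : applySubst δ O ∈ T) : ∃ π : Equiv.Perm ℕ, applySubst (fun n => var (π n)) O ∈ T := by
  obtain ⟨δ', hδ'T, ρ, hρ, hδ'ρ⟩ := hT.exists_injOn hO
  obtain ⟨π, hπ⟩ := hρ.exists_perm_eqOn (finite_fvars O)
  have hπδ' : applySubst (fun n => var (π n)) O = applySubst δ' O :=
    applySubst_congr fun n hn => by rw [hπ hn, hδ'ρ n hn]
  exact ⟨π, hπδ' ▸ hδ'T⟩

theorem ClosedUnderGeneralization.exists_isMGU_mem {T : Set (FTerm F)}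
    (hT : ClosedUnderGeneralization T) {θ : ℕ → FTerm F} {t u L : FTerm F}
    (hθ : Unifies θ t u) (hL : applySubst θ L ∈ T) :
    ∃ μ, IsMGU μ t u ∧ applySubst μ L ∈ T ∧
      ∃ τ : ℕ → FTerm F, ∀ w, applySubst τ (applySubst μ w) = applySubst θ w := by
  obtain ⟨μ₀, hμ₀⟩ := exists_isMGU hθ
  obtain ⟨δ, hδ⟩ := hμ₀.2 θ hθ
  have hδμ₀ (w : FTerm F) : applySubst δ (applySubst μ₀ w) = applySubst θ w := by
    rw [applySubst_applySubst]
    exact applySubst_congr fun n _ => (hδ n).symm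
  obtain ⟨π, hπ⟩ := hT.exists_perm (hδμ₀ L ▸ hL)
  refine ⟨_, hμ₀.comp_perm π, by rwa [← applySubst_applySubst], fun m => δ (π.symm m),
    fun w => ?_⟩
  rw [applySubst_applySubst]
  exact applySubst_congr fun n _ => by simp [applySubst_applySubst, hδ n]

/-! ### Critical pairs -/

theorem IsVariant.rStep {l r M N : FTerm F} (h : IsVariant R (l, r)) {p : List ℕ}
    {μ : ℕ → FTerm F} (hl : subtermAt M p = some (applySubst μ l))
    (hr : replaceAt M p (applySubst μ r) = some N) : RStep R M N := by
  obtain ⟨l₀, r₀, hR, ρ, -, rfl, rfl⟩ := h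
  refine ⟨l₀, r₀, hR, p, fun n => μ (ρ n), ?_, ?_⟩
  · simpa [applySubst_applySubst] using hl
  · simpa [applySubst_applySubst] using hr

theorem CriticalPair.rStep_left {P Q O : FTerm F} (h : CriticalPair R P Q O) : RStep R O P := by
  obtain ⟨S, T', L, R', hST, -, -, u, L', hL', -, μ, hμ, rfl, hP, -⟩ := h
  exact hST.rStep (hμ.1 ▸ subtermAt_applySubst μ hL') hP

theorem CriticalPair.rStep_right {P Q O : FTerm F} (h : CriticalPair R P Q O) : RStep R O Q := by
  obtain ⟨S, T', L, R', -, hLR, -, u, L', -, -, μ, -, rfl, -, rfl⟩ := h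
  exact hLR.rStep (p := []) (subtermAt_nil _) (replaceAt_nil _ _)

theorem joinable_of_variable_overlap {l r W t : FTerm F} {q : List ℕ} {x : ℕ}
    {s : ℕ → FTerm F} (hlr : (l, r) ∈ R) (hq : subtermAt l q = some (var x))
    (hx : RStep R (s x) t) (hW : replaceAt (applySubst s l) q t = some W) :
    Joinable R W (applySubst s r) := by
  have hs (n : ℕ) : RSteps R (s n) (Function.update s x t n) := by
    rcases eq_or_ne n x with rfl | hn
    · rw [Function.update_self]
      exact .single hx
    · rw [Function.update_of_ne hn]
      exact .refl
  refine ⟨applySubst (Function.update s x t) r, ?_, RSteps.applySubst_of_forall fun n _ => hs n⟩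
  exact .tail (RSteps.of_replaceAt_var (.single hx) hq hW)
    ⟨l, r, hlr, [], Function.update s x t, subtermAt_nil _, replaceAt_nil _ _⟩

def interleave (s₁ s₂ : ℕ → FTerm F) (n : ℕ) : FTerm F :=
  if n % 2 = 0 then s₁ (n / 2) else s₂ (n / 2)

theorem applySubst_interleave_even (s₁ s₂ : ℕ → FTerm F) (w : FTerm F) :
    applySubst (interleave s₁ s₂) (applySubst (fun n => var (2 * n)) w) = applySubst s₁ w := by
  rw [applySubst_applySubst]
  exact applySubst_congr fun n _ => by simp [interleave]

theorem applySubst_interleave_odd (s₁ s₂ : ℕ → FTerm F) (w : FTerm F) :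
    applySubst (interleave s₁ s₂) (applySubst (fun n => var (2 * n + 1)) w) =
      applySubst s₂ w := by
  rw [applySubst_applySubst]
  refine applySubst_congr fun n _ => ?_
  simp only [applySubst_var, interleave, Nat.mul_add_mod_self_left, Nat.mod_succ, one_ne_zero,
    if_false]
  congr 1
  omega

theorem joinable_of_nonvariable_overlap {T : Set (FTerm F)}
    (hcp : ∀ P Q O : FTerm F, CriticalPair R P Q O → O ∈ T → Joinable R P Q)
    (hT : ClosedUnderGeneralization T) {l₁ r₁ l₂ r₂ l₁' W : FTerm F} {q : List ℕ}
    {s₁ s₂ : ℕ → FTerm F} (h₁ : (l₁, r₁) ∈ R) (h₂ : (l₂, r₂) ∈ R)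
    (hq : subtermAt l₁ q = some l₁') (hvar : ∀ n, l₁' ≠ var n)
    (hunif : applySubst s₂ l₂ = applySubst s₁ l₁')
    (hW : replaceAt (applySubst s₁ l₁) q (applySubst s₂ r₂) = some W)
    (hl₁T : applySubst s₁ l₁ ∈ T) : Joinable R W (applySubst s₁ r₁) := by
  -- the two rules are renamed apart onto the even and the odd variables
  have hev := applySubst_interleave_even s₁ s₂
  have hod := applySubst_interleave_odd s₁ s₂
  set ev : ℕ → FTerm F := fun n => var (2 * n)
  set od : ℕ → FTerm F := fun n => var (2 * n + 1)
  have hq' : subtermAt (applySubst ev l₁) q = some (applySubst ev l₁') :=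
    subtermAt_applySubst ev hq
  have hunif' : Unifies (interleave s₁ s₂) (applySubst ev l₁') (applySubst od l₂) := by
    simp only [Unifies, ev, od, hev, hod, hunif]
  obtain ⟨μ, hμ, hμT, τ, hτ⟩ := hT.exists_isMGU_mem hunif' (L := applySubst ev l₁) (by rwa [hev])
  obtain ⟨P, hP⟩ := exists_replaceAt (subtermAt_applySubst μ hq') (applySubst μ (applySubst od r₂))
  have hcp' : CriticalPair R P (applySubst μ (applySubst ev r₁))
      (applySubst μ (applySubst ev l₁)) := by
    refine ⟨_, _, _, _,
      ⟨l₂, r₂, h₂, (2 * · + 1), fun a b h => by beta_reduce at h; omega, rfl, rfl⟩,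
      ⟨l₁, r₁, h₁, (2 * ·), fun a b h => by beta_reduce at h; omega, rfl, rfl⟩,
      fun n hn m hm => ?_, q, _, hq', fun n => ?_, μ, hμ, rfl, hP, rfl⟩
    · obtain ⟨a, -, ha⟩ := mem_fvars_applySubst.1 hn
      obtain ⟨b, -, hb⟩ := mem_fvars_applySubst.1 hm
      simp only [fvars_var, Set.mem_singleton_iff] at ha hb
      omega
    · cases l₁' with
      | var m => exact absurd rfl (hvar m)
      | fn f as => simp [ev]
  have hτP : applySubst τ P = W := by
    have := replaceAt_applySubst τ hP
    rw [hτ, hτ, hev, hod, hW] at this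
    exact (Option.some_injective _ this).symm
  simpa [hτP, hτ, hev] using (hcp _ _ _ hcp' hμT).subst τ

theorem joinable_of_nested_redexes {T : Set (FTerm F)}
    (hcp : ∀ P Q O : FTerm F, CriticalPair R P Q O → O ∈ T → Joinable R P Q)
    (hT : RComplete R T) {M N P l₁ r₁ l₂ r₂ : FTerm F} {p q : List ℕ} {s₁ s₂ : ℕ → FTerm F}
    (hM : M ∈ T) (h₁ : (l₁, r₁) ∈ R) (h₂ : (l₂, r₂) ∈ R)
    (hsub₁ : subtermAt M p = some (applySubst s₁ l₁))
    (hrep₁ : replaceAt M p (applySubst s₁ r₁) = some N)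
    (hsub₂ : subtermAt M (p ++ q) = some (applySubst s₂ l₂))
    (hrep₂ : replaceAt M (p ++ q) (applySubst s₂ r₂) = some P) : Joinable R N P := by
  rw [subtermAt_append, hsub₁, Option.bind_some] at hsub₂
  rw [replaceAt_append, hsub₁, Option.bind_some] at hrep₂
  obtain ⟨W, hW, hP⟩ := Option.bind_eq_some_iff.1 hrep₂
  suffices Joinable R (applySubst s₁ r₁) W from this.context hrep₁ hP
  rcases subtermAt_applySubst_cases hsub₂ with ⟨l₁', hq, hvar, hunif⟩ | ⟨q₁, x, q₂, rfl, hq₁, hq₂⟩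
  · exact (joinable_of_nonvariable_overlap hcp hT.closedUnderGeneralization h₁ h₂ hq hvar
      hunif hW (hT.subterm_mem hM hsub₁)).symm
  · obtain ⟨t, ht⟩ := exists_replaceAt hq₂ (applySubst s₂ r₂)
    have hsx : subtermAt (applySubst s₁ l₁) q₁ = some (s₁ x) := by
      simpa using subtermAt_applySubst s₁ hq₁
    rw [replaceAt_append, hsx, Option.bind_some, ht, Option.bind_some] at hW
    exact (joinable_of_variable_overlap h₁ hq₁ ⟨l₂, r₂, h₂, q₂, s₂, hq₂, ht⟩ hW).symm

theorem joinable_of_disjoint_redexes {M N P A A' B B' : FTerm F} {c p q : List ℕ} {i j : ℕ}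
    (hij : i ≠ j) (hA : RStep R A A') (hB : RStep R B B')
    (hsubA : subtermAt M (c ++ i :: p) = some A) (hN : replaceAt M (c ++ i :: p) A' = some N)
    (hsubB : subtermAt M (c ++ j :: q) = some B) (hP : replaceAt M (c ++ j :: q) B' = some P) :
    Joinable R N P := by
  obtain ⟨Q, hNQ, hPQ⟩ := replaceAt_comm_of_ne hij hN hP
  exact ⟨Q, .single (hB.context (subtermAt_replaceAt_of_ne hij hN ▸ hsubB) hNQ),
    .single (hA.context (subtermAt_replaceAt_of_ne hij.symm hP ▸ hsubA) hPQ)⟩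

theorem locally_confluent_iff_critical_pairs_joinable_general
    (R : Set (FTerm F × FTerm F))
    (T : Set (FTerm F)) (hT : RComplete R T) :
    LocallyConfluentOn R T ↔
      ∀ P Q O : FTerm F, CriticalPair R P Q O → O ∈ T → Joinable R P Q := by
  refine ⟨fun hLC P Q O hPQ hO => hLC O hO P Q hPQ.rStep_left hPQ.rStep_right,
    fun hcp M hM N P hN hP => ?_⟩
  obtain ⟨l₁, r₁, h₁, p₁, s₁, hsub₁, hrep₁⟩ := hN
  obtain ⟨l₂, r₂, h₂, p₂, s₂, hsub₂, hrep₂⟩ := hP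
  rcases position_trichotomy p₁ p₂ with ⟨q, rfl⟩ | ⟨q, rfl⟩ | ⟨c, i, j, p, q, hij, rfl, rfl⟩
  · exact joinable_of_nested_redexes hcp hT hM h₁ h₂ hsub₁ hrep₁ hsub₂ hrep₂
  · exact (joinable_of_nested_redexes hcp hT hM h₂ h₁ hsub₂ hrep₂ hsub₁ hrep₁).symm
  · exact joinable_of_disjoint_redexes hij (.root h₁ s₁) (.root h₂ s₂) hsub₁ hrep₁ hsub₂ hrep₂

/-- **generalization of Huet's critical pair lemma.**
For any term rewriting system `R` and any `→_R`-complete subset `T` of terms: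
`→_R` is locally confluent on `T` iff every critical pair `(P, Q)` of `R`
possessing an overlap belonging to `T` satisfies `P ↓ Q`. -/
theorem locally_confluent_iff_critical_pairs_joinable
    (R : Set (FTerm F × FTerm F)) (hR : IsTRS R)
    (T : Set (FTerm F)) (hT : RComplete R T) :
    LocallyConfluentOn R T ↔
      ∀ P Q O : FTerm F, CriticalPair R P Q O → O ∈ T → Joinable R P Q :=
  locally_confluent_iff_critical_pairs_joinable_general R T hT

end TRS
end

section
/- Let 𝒜 = (A, ≍, ≤) be a prime system. Then the domain (elements(𝒜), ⊆) is a prime algebraic coherent partial order whose complete primes are exactly the sets ↓a = {b ∈ A | b ≤ a} for a ∈ A; consequently it is an algebraic cpo whose isolated (compact) elements are the downward closures of finite consistent subsets of A. Conversely, if (D, ⊑) is a prime algebraic coherent partial order, P is its set of complete primes, and a ≍ b is defined to hold iff a, b ∈ P have an upper bound in D, then (P, ≍, ⊑|_P) is a prime system whose domain of elements ordered by ⊆ is order-isomorphic to (D, ⊑). -/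
/-!
Lubs of elements are unions, and a pairwise bounded family of elements has its union as an
element. Hence a prime `a` in a lub already lies in a member, which makes `↓a` a complete
prime; for a finite consistent `X`, directedness collects `X` into a single member, which
makes `↓X` isolated. Every element is the union of the `↓a`, and the directed union of the
`↓X` for finite `X`, that it contains, so a complete prime (an isolated element) is one of
them. Conversely `x ↦ {complete primes below x}` is an order embedding by prime
algebraicity, and it is onto by coherence: an element is the set of complete primes below
its lub, because each of them lies below a member.
-/

set_option autoImplicit false

namespace PrimeSys

universe u v

/-- The data of a prime system over a universe `α` of potential primes:
a set of primes, a consistency relation and an entailment relation. -/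
structure PrimeData (α : Type u) where
  carrier : Set α
  con : α → α → Prop
  le : α → α → Prop

/-- `A` is a prime system: `con` and `le` are relations on the prime set `carrier`;
`con` is reflexive and symmetric; `le` is a partial order; and consistency is
inherited downwards: if `a ≍ b` and `c ≤ b` then `a ≍ c`. -/
structure IsPrimeSystem {α : Type u} (A : PrimeData α) : Prop where
  con_mem : ∀ a b, A.con a b → a ∈ A.carrier ∧ b ∈ A.carrier
  le_mem : ∀ a b, A.le a b → a ∈ A.carrier ∧ b ∈ A.carrier
  con_refl : ∀ a ∈ A.carrier, A.con a a
  con_symm : ∀ a b, A.con a b → A.con b a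
  le_refl : ∀ a ∈ A.carrier, A.le a a
  le_antisymm : ∀ a b, A.le a b → A.le b a → a = b
  le_trans : ∀ a b c, A.le a b → A.le b c → A.le a c
  con_dcl : ∀ a b c, A.con a b → A.le c b → A.con a c

namespace PrimeData

variable {α : Type u}

/-- The elements of a prime system: downward closed, pairwise consistent
subsets of the prime set. -/
def IsElement (A : PrimeData α) (d : Set α) : Prop :=
  d ⊆ A.carrier ∧ (∀ a b, A.le a b → b ∈ d → a ∈ d) ∧ ∀ a ∈ d, ∀ b ∈ d, A.con a b

/-- The substructure relation `𝒜 ⊴ ℬ`: the prime set of `𝒜` is contained in that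
of `ℬ`, and consistency and entailment of `𝒜` are the restrictions of those of `ℬ`. -/
def Sub (A B : PrimeData α) : Prop :=
  A.carrier ⊆ B.carrier ∧
  ∀ a ∈ A.carrier, ∀ b ∈ A.carrier, (A.con a b ↔ B.con a b) ∧ (A.le a b ↔ B.le a b)

end PrimeData

/-- The least prime system `(∅, ∅, ∅)`. -/
def botPD (α : Type u) : PrimeData α := ⟨∅, fun _ _ => False, fun _ _ => False⟩

/-- The union `⋃ᵢ 𝒜ᵢ = (⋃ᵢ Aᵢ, ⋃ᵢ ≍ᵢ, ⋃ᵢ ≤ᵢ)` of an ω-chain of prime systems. -/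
def chainUnion {α : Type u} (A : ℕ → PrimeData α) : PrimeData α where
  carrier := ⋃ i, (A i).carrier
  con a b := ∃ i, (A i).con a b
  le a b := ∃ i, (A i).le a b

/-- An ω-chain `𝒜₀ ⊴ 𝒜₁ ⊴ 𝒜₂ ⊴ …` of prime systems. -/
def IsPSChain {α : Type u} (A : ℕ → PrimeData α) : Prop :=
  (∀ i, IsPrimeSystem (A i)) ∧ ∀ i, (A i).Sub (A (i + 1))

end PrimeSys

namespace PrimeSys

universe u

universe w

/-- A subset of a partial order is pairwise consistent iff any two of its members
have an upper bound. -/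
def PairwiseConsistentSet {D : Type w} [PartialOrder D] (S : Set D) : Prop :=
  ∀ a ∈ S, ∀ b ∈ S, ∃ c, a ≤ c ∧ b ≤ c

/-- A partial order is coherent iff every pairwise consistent subset has a lub. -/
def CoherentOrder (D : Type w) [PartialOrder D] : Prop :=
  ∀ S : Set D, PairwiseConsistentSet S → ∃ l, IsLUB S l

/-- `p` is a complete prime iff whenever the lub of `S` exists and `p` is below it,
`p` is below some member of `S`. -/
def CompletePrime {D : Type w} [PartialOrder D] (p : D) : Prop :=
  ∀ (S : Set D) (l : D), IsLUB S l → p ≤ l → ∃ d ∈ S, p ≤ d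

/-- A partial order is prime algebraic iff every element is the lub of the complete
primes below it. -/
def PrimeAlgebraic (D : Type w) [PartialOrder D] : Prop :=
  ∀ d : D, IsLUB {p | CompletePrime p ∧ p ≤ d} d

/-- `k` is isolated (finite, compact) iff whenever `k` is below the lub of a
nonempty directed set, it is below some member of it. -/
def IsIsolated {D : Type w} [PartialOrder D] (k : D) : Prop :=
  ∀ S : Set D, S.Nonempty → DirectedOn (· ≤ ·) S →
    ∀ l : D, IsLUB S l → k ≤ l → ∃ d ∈ S, k ≤ d

/-- A partial order is algebraic iff every element is the lub of the isolated
elements below it. -/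
def AlgebraicOrder (D : Type w) [PartialOrder D] : Prop :=
  ∀ d : D, IsLUB {k | IsIsolated k ∧ k ≤ d} d

/-- A partial order is a cpo iff every nonempty directed subset has a lub. -/
def IsCpo (D : Type w) [PartialOrder D] : Prop :=
  ∀ S : Set D, S.Nonempty → DirectedOn (· ≤ ·) S → ∃ l, IsLUB S l

/-- The domain of a prime system: its elements, ordered by inclusion. -/
abbrev Elems {α : Type u} (A : PrimeData α) : Type u := {d : Set α // A.IsElement d}

/-- The prime system associated with a prime algebraic coherent partial order:
its primes are the complete primes, consistency is having an upper bound, and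
entailment is the restriction of the order. -/
def primeDataOf (D : Type w) [PartialOrder D] : PrimeData D where
  carrier := {p | CompletePrime p}
  con a b := CompletePrime a ∧ CompletePrime b ∧ ∃ c, a ≤ c ∧ b ≤ c
  le a b := CompletePrime a ∧ CompletePrime b ∧ a ≤ b

section OrderTheory

variable {D : Type w} [PartialOrder D]

theorem CompletePrime.isIsolated {p : D} (hp : CompletePrime p) : IsIsolated p :=
  fun S _ _ l hl hpl => hp S l hl hpl

theorem CompletePrime.mem_of_isLUB {p : D} (hp : CompletePrime p) {S : Set D}
    (hS : IsLUB S p) : p ∈ S := by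
  obtain ⟨d, hd, hpd⟩ := hp S p hS le_rfl
  rwa [le_antisymm hpd (hS.1 hd)]

theorem IsIsolated.mem_of_isLUB {k : D} (hk : IsIsolated k) {S : Set D} (hne : S.Nonempty)
    (hdir : DirectedOn (· ≤ ·) S) (hS : IsLUB S k) : k ∈ S := by
  obtain ⟨d, hd, hkd⟩ := hk S hne hdir k hS le_rfl
  rwa [le_antisymm hkd (hS.1 hd)]

theorem CoherentOrder.isCpo (hD : CoherentOrder D) : IsCpo D :=
  fun S _ hdir => hD S fun a ha b hb =>
    let ⟨c, _, hac, hbc⟩ := hdir a ha b hb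
    ⟨c, hac, hbc⟩

theorem PrimeAlgebraic.algebraicOrder (hD : PrimeAlgebraic D) : AlgebraicOrder D :=
  fun d => ⟨fun _ hk => hk.2, fun _ hu =>
    (hD d).2 fun _ hp => hu ⟨hp.1.isIsolated, hp.2⟩⟩

end OrderTheory

namespace PrimeData

variable {α : Type u} {A : PrimeData α}

def downset (A : PrimeData α) (X : Set α) : Set α := {b | ∃ a ∈ X, A.le b a}

theorem downset_mono {X Y : Set α} (h : X ⊆ Y) : A.downset X ⊆ A.downset Y :=
  fun _ ⟨a, ha, hba⟩ => ⟨a, h ha, hba⟩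

theorem subset_downset (hA : IsPrimeSystem A) {X : Set α} (hX : X ⊆ A.carrier) :
    X ⊆ A.downset X :=
  fun a ha => ⟨a, ha, hA.le_refl a (hX ha)⟩

theorem IsElement.downset_subset {d X : Set α} (hd : A.IsElement d) (hX : X ⊆ d) :
    A.downset X ⊆ d :=
  fun b ⟨a, ha, hba⟩ => hd.2.1 b a hba (hX ha)

theorem isElement_downset (hA : IsPrimeSystem A) {X : Set α}
    (hXc : ∀ a ∈ X, ∀ b ∈ X, A.con a b) : A.IsElement (A.downset X) := by
  refine ⟨fun b ⟨a, _, hba⟩ => (hA.le_mem b a hba).1,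
    fun b c hbc ⟨a, ha, hca⟩ => ⟨a, ha, hA.le_trans b c a hbc hca⟩, ?_⟩
  rintro b ⟨a, ha, hba⟩ c ⟨a', ha', hca'⟩
  have hac : A.con a c := hA.con_dcl a a' c (hXc a ha a' ha') hca'
  exact hA.con_symm _ _ (hA.con_dcl c a b (hA.con_symm _ _ hac) hba)

theorem isElement_principal (hA : IsPrimeSystem A) {a : α} (ha : a ∈ A.carrier) :
    A.IsElement {b | A.le b a} := by
  refine ⟨fun b hb => (hA.le_mem b a hb).1, fun b c hbc hca => hA.le_trans b c a hbc hca,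
    fun b hb c hc => ?_⟩
  have hab : A.con a b := hA.con_dcl a a b (hA.con_refl a ha) hb
  exact hA.con_dcl b a c (hA.con_symm _ _ hab) hc

end PrimeData

namespace Elems

open PrimeData

variable {α : Type u} {A : PrimeData α}

theorem isElement_biUnion {S : Set (Elems A)} (hS : PairwiseConsistentSet S) :
    A.IsElement (⋃ d ∈ S, (d : Set α)) := by
  simp only [IsElement, Set.iUnion_subset_iff, Set.mem_iUnion, exists_prop]
  refine ⟨fun d _ => d.2.1, fun a b hab ⟨d, hd, hb⟩ => ⟨d, hd, d.2.2.1 a b hab hb⟩, ?_⟩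
  rintro a ⟨d, hd, ha⟩ b ⟨e, he, hb⟩
  obtain ⟨c, hdc, hec⟩ := hS d hd e he
  exact c.2.2.2 a (hdc ha) b (hec hb)

theorem isLUB_biUnion {S : Set (Elems A)} (hS : PairwiseConsistentSet S) :
    IsLUB S (⟨_, isElement_biUnion hS⟩ : Elems A) :=
  ⟨fun _ hd => Set.subset_biUnion_of_mem (u := fun d : Elems A => (d : Set α)) hd,
    fun _ hu => Set.iUnion₂_subset fun _ hd => hu hd⟩

theorem isLUB_iff {S : Set (Elems A)} {l : Elems A} :
    IsLUB S l ↔ (l : Set α) = ⋃ d ∈ S, (d : Set α) := by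
  refine ⟨fun hl => ?_, fun hl => ⟨fun d hd => ?_, fun u hu => ?_⟩⟩
  · have hS : PairwiseConsistentSet S := fun a ha b hb => ⟨l, hl.1 ha, hl.1 hb⟩
    exact congrArg Subtype.val (hl.unique (isLUB_biUnion hS))
  · change (d : Set α) ⊆ l
    rw [hl]
    exact Set.subset_biUnion_of_mem (u := fun d : Elems A => (d : Set α)) hd
  · change (l : Set α) ⊆ u
    rw [hl]
    exact Set.iUnion₂_subset fun _ hd => hu hd

theorem exists_mem_of_isLUB {S : Set (Elems A)} {l : Elems A} (hl : IsLUB S l) {a : α}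
    (ha : a ∈ (l : Set α)) : ∃ d ∈ S, a ∈ (d : Set α) := by
  simpa only [isLUB_iff.1 hl, Set.mem_iUnion, exists_prop] using ha

theorem isLUB_of_forall_mem {S : Set (Elems A)} {d : Elems A} (hle : ∀ e ∈ S, e ≤ d)
    (hcover : ∀ a ∈ (d : Set α), ∃ e ∈ S, a ∈ (e : Set α)) : IsLUB S d := by
  refine isLUB_iff.2 (Set.Subset.antisymm (fun a ha => ?_) (Set.iUnion₂_subset hle))
  simpa only [Set.mem_iUnion, exists_prop] using hcover a ha

theorem coherentOrder : CoherentOrder (Elems A) :=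
  fun _ hS => ⟨_, isLUB_biUnion hS⟩

def principal (hA : IsPrimeSystem A) {a : α} (ha : a ∈ A.carrier) : Elems A :=
  ⟨{b | A.le b a}, isElement_principal hA ha⟩

def downset (hA : IsPrimeSystem A) {X : Set α} (hXc : ∀ a ∈ X, ∀ b ∈ X, A.con a b) :
    Elems A :=
  ⟨A.downset X, isElement_downset hA hXc⟩

theorem principal_le_iff (hA : IsPrimeSystem A) {a : α} (ha : a ∈ A.carrier) {d : Elems A} :
    principal hA ha ≤ d ↔ a ∈ (d : Set α) :=
  ⟨fun h => h (hA.le_refl a ha), fun h b hb => d.2.2.1 b a hb h⟩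

theorem downset_le_iff (hA : IsPrimeSystem A) {X : Set α} (hX : X ⊆ A.carrier)
    (hXc : ∀ a ∈ X, ∀ b ∈ X, A.con a b) {d : Elems A} :
    downset hA hXc ≤ d ↔ X ⊆ (d : Set α) :=
  ⟨fun h => (subset_downset hA hX).trans h, d.2.downset_subset⟩

theorem completePrime_principal (hA : IsPrimeSystem A) {a : α} (ha : a ∈ A.carrier) :
    CompletePrime (principal hA ha) := by
  intro S l hl hal
  obtain ⟨d, hd, had⟩ := exists_mem_of_isLUB hl ((principal_le_iff hA ha).1 hal)
  exact ⟨d, hd, (principal_le_iff hA ha).2 had⟩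

theorem isIsolated_downset (hA : IsPrimeSystem A) {X : Set α} (hXfin : X.Finite)
    (hX : X ⊆ A.carrier) (hXc : ∀ a ∈ X, ∀ b ∈ X, A.con a b) :
    IsIsolated (downset hA hXc) := by
  intro S hne hdir l hl hXl
  have hcover : (hXfin.toFinset : Set α) ⊆ ⋃ d ∈ S, (d : Set α) := by
    rw [hXfin.coe_toFinset, ← isLUB_iff.1 hl]
    exact (downset_le_iff hA hX hXc).1 hXl
  obtain ⟨d, hd, hXd⟩ := hdir.exists_mem_subset_of_finset_subset_biUnion hne hcover
  exact ⟨d, hd, (downset_le_iff hA hX hXc).2 (hXfin.coe_toFinset ▸ hXd)⟩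

theorem primeAlgebraic (hA : IsPrimeSystem A) : PrimeAlgebraic (Elems A) :=
  fun d => isLUB_of_forall_mem (fun _ hp => hp.2) fun a ha =>
    ⟨principal hA (d.2.1 ha), ⟨completePrime_principal hA _, (principal_le_iff hA _).2 ha⟩,
      hA.le_refl a (d.2.1 ha)⟩

theorem completePrime_iff (hA : IsPrimeSystem A) {p : Elems A} :
    CompletePrime p ↔ ∃ a ∈ A.carrier, (p : Set α) = {b | A.le b a} := by
  constructor
  · intro hp
    have hlub : IsLUB {e : Elems A | ∃ a ∈ (p : Set α), (e : Set α) = {b | A.le b a}} p :=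
      isLUB_of_forall_mem (fun _ ⟨a, ha, he⟩ b hb => p.2.2.1 b a (he.subset hb) ha)
        fun a ha => ⟨principal hA (p.2.1 ha), ⟨a, ha, rfl⟩, hA.le_refl a (p.2.1 ha)⟩
    obtain ⟨a, ha, hpa⟩ := hp.mem_of_isLUB hlub
    exact ⟨a, p.2.1 ha, hpa⟩
  · rintro ⟨a, ha, hpa⟩
    obtain rfl : p = principal hA ha := Subtype.ext hpa
    exact completePrime_principal hA ha

def finiteDownsets (d : Elems A) : Set (Elems A) :=
  {e | ∃ X : Set α, X.Finite ∧ X ⊆ (d : Set α) ∧ (e : Set α) = A.downset X}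

theorem exists_mem_finiteDownsets (hA : IsPrimeSystem A) {d : Elems A} {X : Set α}
    (hXfin : X.Finite) (hXd : X ⊆ (d : Set α)) :
    ∃ e ∈ finiteDownsets d, (e : Set α) = A.downset X :=
  ⟨downset hA fun a ha b hb => d.2.2.2 a (hXd ha) b (hXd hb),
    ⟨X, hXfin, hXd, rfl⟩, rfl⟩

theorem directedOn_finiteDownsets (hA : IsPrimeSystem A) (d : Elems A) :
    DirectedOn (· ≤ ·) (finiteDownsets d) := by
  rintro e₁ ⟨X, hXfin, hXd, he₁⟩ e₂ ⟨Y, hYfin, hYd, he₂⟩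
  obtain ⟨e, he, hXY⟩ :=
    exists_mem_finiteDownsets hA (hXfin.union hYfin) (Set.union_subset hXd hYd)
  refine ⟨e, he, ?_, ?_⟩
  · change (e₁ : Set α) ⊆ e
    rw [he₁, hXY]
    exact downset_mono Set.subset_union_left
  · change (e₂ : Set α) ⊆ e
    rw [he₂, hXY]
    exact downset_mono Set.subset_union_right

theorem isLUB_finiteDownsets (hA : IsPrimeSystem A) (d : Elems A) :
    IsLUB (finiteDownsets d) d := by
  refine isLUB_of_forall_mem (fun _ ⟨_, _, hXd, he⟩ => he.subset.trans (d.2.downset_subset hXd))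
    fun a ha => ?_
  obtain ⟨e, he, hea⟩ :=
    exists_mem_finiteDownsets hA (Set.finite_singleton a) (Set.singleton_subset_iff.2 ha)
  exact ⟨e, he,
    hea.symm.subset <| subset_downset hA (Set.singleton_subset_iff.2 (d.2.1 ha)) rfl⟩

theorem isIsolated_iff (hA : IsPrimeSystem A) {k : Elems A} :
    IsIsolated k ↔ ∃ X : Set α, X.Finite ∧ X ⊆ A.carrier ∧
      (∀ a ∈ X, ∀ b ∈ X, A.con a b) ∧ (k : Set α) = A.downset X := by
  constructor
  · intro hk
    obtain ⟨e, he, -⟩ := exists_mem_finiteDownsets hA (d := k) Set.finite_empty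
      (Set.empty_subset _)
    obtain ⟨X, hXfin, hXk, hkX⟩ :=
      hk.mem_of_isLUB ⟨e, he⟩ (directedOn_finiteDownsets hA k) (isLUB_finiteDownsets hA k)
    exact ⟨X, hXfin, hXk.trans k.2.1, fun a ha b hb => k.2.2.2 a (hXk ha) b (hXk hb), hkX⟩
  · rintro ⟨X, hXfin, hX, hXc, hkX⟩
    obtain rfl : k = downset hA hXc := Subtype.ext hkX
    exact isIsolated_downset hA hXfin hX hXc

end Elems

section Representation

variable (D : Type w) [PartialOrder D]

theorem isPrimeSystem_primeDataOf : IsPrimeSystem (primeDataOf D) where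
  con_mem _ _ h := ⟨h.1, h.2.1⟩
  le_mem _ _ h := ⟨h.1, h.2.1⟩
  con_refl a ha := ⟨ha, ha, a, le_rfl, le_rfl⟩
  con_symm _ _ := fun ⟨ha, hb, c, hac, hbc⟩ => ⟨hb, ha, c, hbc, hac⟩
  le_refl _ ha := ⟨ha, ha, le_rfl⟩
  le_antisymm _ _ hab hba := le_antisymm hab.2.2 hba.2.2
  le_trans _ _ _ hab hbc := ⟨hab.1, hbc.2.1, hab.2.2.trans hbc.2.2⟩
  con_dcl _ _ _ := fun ⟨ha, _, u, hau, hbu⟩ ⟨hc, _, hcb⟩ => ⟨ha, hc, u, hau, hcb.trans hbu⟩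

variable {D}

def primesBelow (x : D) : Elems (primeDataOf D) :=
  ⟨{p | CompletePrime p ∧ p ≤ x}, fun _ hp => hp.1,
    fun _ _ ⟨hp, _, hpq⟩ ⟨_, hqx⟩ => ⟨hp, hpq.trans hqx⟩,
    fun _ ⟨hp, hpx⟩ _ ⟨hq, hqx⟩ => ⟨hp, hq, x, hpx, hqx⟩⟩

theorem primesBelow_le_primesBelow_iff (hD : PrimeAlgebraic D) {x y : D} :
    primesBelow x ≤ primesBelow y ↔ x ≤ y :=
  ⟨fun h => (hD x).2 fun _ hp => (h hp).2,
    fun hxy _ ⟨hp, hpx⟩ => ⟨hp, hpx.trans hxy⟩⟩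

theorem pairwiseConsistentSet_coe (d : Elems (primeDataOf D)) :
    PairwiseConsistentSet (d : Set D) :=
  fun a ha b hb => (d.2.2.2 a ha b hb).2.2

theorem primesBelow_eq_of_isLUB {d : Elems (primeDataOf D)} {l : D}
    (hl : IsLUB (d : Set D) l) : primesBelow l = d := by
  refine Subtype.ext (Set.Subset.antisymm ?_ fun p hp => ⟨d.2.1 hp, hl.1 hp⟩)
  rintro p ⟨hp, hpl⟩
  obtain ⟨q, hq, hpq⟩ := hp (d : Set D) l hl hpl
  exact d.2.2.1 p q ⟨hp, d.2.1 hq, hpq⟩ hq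

theorem primesBelow_surjective (hD : CoherentOrder D) :
    Function.Surjective (primesBelow (D := D)) := fun d =>
  let ⟨l, hl⟩ := hD _ (pairwiseConsistentSet_coe d)
  ⟨l, primesBelow_eq_of_isLUB hl⟩

noncomputable def primesBelowOrderIso (hcoh : CoherentOrder D) (halg : PrimeAlgebraic D) :
    D ≃o Elems (primeDataOf D) :=
  OrderIso.ofSurjective (OrderEmbedding.ofMapLEIff primesBelow
    fun _ _ => primesBelow_le_primesBelow_iff halg) (primesBelow_surjective hcoh)

end Representation

/-- **Nielsen–Plotkin–Winskel representation.**
For a prime system `𝒜`, the domain `(elements(𝒜), ⊆)` is a prime algebraic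
coherent partial order whose complete primes are exactly the downward closures
`↓a` of single primes `a`; consequently it is an algebraic cpo whose isolated
elements are the downward closures of finite consistent sets of primes.
Conversely, the complete primes of a prime algebraic coherent partial order
`(D, ⊑)`, with consistency "having an upper bound" and entailment `⊑`, form a
prime system whose domain of elements is order-isomorphic to `(D, ⊑)`. -/
theorem prime_system_representation {α : Type u} :
    (∀ A : PrimeData α, IsPrimeSystem A →
      CoherentOrder (Elems A) ∧
      PrimeAlgebraic (Elems A) ∧
      ({p : Elems A | CompletePrime p} =
        {p : Elems A | ∃ a ∈ A.carrier, (p : Set α) = {b | A.le b a}}) ∧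
      IsCpo (Elems A) ∧
      AlgebraicOrder (Elems A) ∧
      ({k : Elems A | IsIsolated k} =
        {k : Elems A | ∃ X : Set α, X.Finite ∧ X ⊆ A.carrier ∧
          (∀ a ∈ X, ∀ b ∈ X, A.con a b) ∧
          (k : Set α) = {b | ∃ a ∈ X, A.le b a}})) ∧
    (∀ (D : Type u) [PartialOrder D], CoherentOrder D → PrimeAlgebraic D →
      IsPrimeSystem (primeDataOf D) ∧
      Nonempty (Elems (primeDataOf D) ≃o D)) := by
  refine ⟨fun A hA => ⟨Elems.coherentOrder, Elems.primeAlgebraic hA,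
    Set.ext fun _ => Elems.completePrime_iff hA, Elems.coherentOrder.isCpo,
    (Elems.primeAlgebraic hA).algebraicOrder, Set.ext fun _ => Elems.isIsolated_iff hA⟩,
    fun D _ hcoh halg => ⟨isPrimeSystem_primeDataOf D, ⟨(primesBelowOrderIso hcoh halg).symm⟩⟩⟩

end PrimeSys
end

section
/- A unary operation F on prime systems is continuous with respect to ⊴ if and only if F is monotonic and continuous on prime sets. -/
set_option autoImplicit false

namespace PrimeSys

universe u

variable {α : Type u}

/-- An operation on prime systems is monotonic iff it preserves `⊴`. -/
def Monotonic (F : PrimeData α → PrimeData α) : Prop :=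
  ∀ A B : PrimeData α, IsPrimeSystem A → IsPrimeSystem B → A.Sub B → (F A).Sub (F B)

/-- An operation on prime systems is continuous iff it is monotonic and commutes
with least upper bounds of ω-chains. -/
def ContinuousOp (F : PrimeData α → PrimeData α) : Prop :=
  Monotonic F ∧ ∀ A : ℕ → PrimeData α, IsPSChain A →
    F (chainUnion A) = chainUnion (fun i => F (A i))

/-- An operation on prime systems is continuous on prime sets iff for every ω-chain,
each prime of `F(⋃ᵢ 𝒜ᵢ)` is a prime of `⋃ᵢ F(𝒜ᵢ)`. -/
def ContOnPrimeSets (F : PrimeData α → PrimeData α) : Prop :=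
  ∀ A : ℕ → PrimeData α, IsPSChain A →
    ∀ c ∈ (F (chainUnion A)).carrier, ∃ i, c ∈ (F (A i)).carrier

/-!
Monotonicity makes `(F 𝒜ᵢ)ᵢ` an ω-chain whose union is a subsystem of `F (⋃ᵢ 𝒜ᵢ)`, and
continuity on prime sets says that both have the same primes. Since the relations of a prime
system live on its primes, a subsystem with the same primes is the whole system.
-/

attribute [ext] PrimeData

namespace PrimeData

theorem Sub.refl (A : PrimeData α) : A.Sub A :=
  ⟨subset_rfl, fun _ _ _ _ => ⟨Iff.rfl, Iff.rfl⟩⟩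

theorem Sub.trans {A B C : PrimeData α} (hAB : A.Sub B) (hBC : B.Sub C) : A.Sub C := by
  refine ⟨hAB.1.trans hBC.1, fun a ha b hb => ?_⟩
  obtain ⟨hcon, hle⟩ := hAB.2 a ha b hb
  obtain ⟨hcon', hle'⟩ := hBC.2 a (hAB.1 ha) b (hAB.1 hb)
  exact ⟨hcon.trans hcon', hle.trans hle'⟩

instance : Std.Refl (Sub (α := α)) := ⟨Sub.refl⟩

instance : IsTrans (PrimeData α) Sub := ⟨fun _ _ _ => Sub.trans⟩

theorem Sub.con_of_con {A B : PrimeData α} (hAB : A.Sub B) (hA : IsPrimeSystem A) {a b : α}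
    (h : A.con a b) : B.con a b :=
  ((hAB.2 a (hA.con_mem a b h).1 b (hA.con_mem a b h).2).1).mp h

theorem Sub.le_of_le {A B : PrimeData α} (hAB : A.Sub B) (hA : IsPrimeSystem A) {a b : α}
    (h : A.le a b) : B.le a b :=
  ((hAB.2 a (hA.le_mem a b h).1 b (hA.le_mem a b h).2).2).mp h

theorem Sub.eq_of_carrier_subset {A B : PrimeData α} (hA : IsPrimeSystem A)
    (hB : IsPrimeSystem B) (hAB : A.Sub B) (hBA : B.carrier ⊆ A.carrier) : A = B := by
  have hrel {a b : α} (ha : a ∈ B.carrier) (hb : b ∈ B.carrier) := hAB.2 a (hBA ha) b (hBA hb)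
  ext a b
  · exact ⟨fun ha => hAB.1 ha, fun ha => hBA ha⟩
  · exact ⟨hAB.con_of_con hA,
      fun h => (hrel (hB.con_mem a b h).1 (hB.con_mem a b h).2).1.mpr h⟩
  · exact ⟨hAB.le_of_le hA,
      fun h => (hrel (hB.le_mem a b h).1 (hB.le_mem a b h).2).2.mpr h⟩

end PrimeData

open PrimeData

namespace IsPSChain

variable {A : ℕ → PrimeData α}

theorem sub_of_le (hA : IsPSChain A) {i j : ℕ} (hij : i ≤ j) : (A i).Sub (A j) :=
  Nat.rel_of_forall_rel_succ_of_le Sub hA.2 hij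

theorem con_of_le (hA : IsPSChain A) {i j : ℕ} (hij : i ≤ j) {a b : α} (h : (A i).con a b) :
    (A j).con a b :=
  (hA.sub_of_le hij).con_of_con (hA.1 i) h

theorem le_of_le (hA : IsPSChain A) {i j : ℕ} (hij : i ≤ j) {a b : α} (h : (A i).le a b) :
    (A j).le a b :=
  (hA.sub_of_le hij).le_of_le (hA.1 i) h

theorem exists_mem_carrier_of_mem_chainUnion (hA : IsPSChain A) {a b : α}
    (ha : a ∈ (chainUnion A).carrier) (hb : b ∈ (chainUnion A).carrier) :
    ∃ k, a ∈ (A k).carrier ∧ b ∈ (A k).carrier := by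
  obtain ⟨i, hai⟩ := Set.mem_iUnion.mp ha
  obtain ⟨j, hbj⟩ := Set.mem_iUnion.mp hb
  exact ⟨max i j, (hA.sub_of_le (le_max_left i j)).1 hai,
    (hA.sub_of_le (le_max_right i j)).1 hbj⟩

theorem isPrimeSystem_chainUnion (hA : IsPSChain A) : IsPrimeSystem (chainUnion A) where
  con_mem a b := fun ⟨i, h⟩ =>
    ⟨Set.mem_iUnion_of_mem i ((hA.1 i).con_mem a b h).1,
      Set.mem_iUnion_of_mem i ((hA.1 i).con_mem a b h).2⟩
  le_mem a b := fun ⟨i, h⟩ =>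
    ⟨Set.mem_iUnion_of_mem i ((hA.1 i).le_mem a b h).1,
      Set.mem_iUnion_of_mem i ((hA.1 i).le_mem a b h).2⟩
  con_refl a ha := by
    obtain ⟨i, hai⟩ := Set.mem_iUnion.mp ha
    exact ⟨i, (hA.1 i).con_refl a hai⟩
  con_symm a b := fun ⟨i, h⟩ => ⟨i, (hA.1 i).con_symm a b h⟩
  le_refl a ha := by
    obtain ⟨i, hai⟩ := Set.mem_iUnion.mp ha
    exact ⟨i, (hA.1 i).le_refl a hai⟩
  le_antisymm a b := fun ⟨i, hab⟩ ⟨j, hba⟩ =>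
    (hA.1 (max i j)).le_antisymm a b
      (hA.le_of_le (le_max_left i j) hab) (hA.le_of_le (le_max_right i j) hba)
  le_trans a b c := fun ⟨i, hab⟩ ⟨j, hbc⟩ =>
    ⟨max i j, (hA.1 (max i j)).le_trans a b c
      (hA.le_of_le (le_max_left i j) hab) (hA.le_of_le (le_max_right i j) hbc)⟩
  con_dcl a b c := fun ⟨i, hab⟩ ⟨j, hcb⟩ =>
    ⟨max i j, (hA.1 (max i j)).con_dcl a b c
      (hA.con_of_le (le_max_left i j) hab) (hA.le_of_le (le_max_right i j) hcb)⟩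

theorem chainUnion_sub {C : PrimeData α} (hA : IsPSChain A) (hAC : ∀ i, (A i).Sub C) :
    (chainUnion A).Sub C := by
  refine ⟨Set.iUnion_subset fun i => (hAC i).1, fun a ha b hb => ?_⟩
  obtain ⟨k, hak, hbk⟩ := hA.exists_mem_carrier_of_mem_chainUnion ha hb
  obtain ⟨hcon, hle⟩ := (hAC k).2 a hak b hbk
  exact ⟨⟨fun ⟨i, h⟩ => (hAC i).con_of_con (hA.1 i) h, fun h => ⟨k, hcon.mpr h⟩⟩,
    ⟨fun ⟨i, h⟩ => (hAC i).le_of_le (hA.1 i) h, fun h => ⟨k, hle.mpr h⟩⟩⟩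

theorem sub_chainUnion (hA : IsPSChain A) (i : ℕ) : (A i).Sub (chainUnion A) := by
  refine ⟨Set.subset_iUnion_of_subset i subset_rfl, fun a ha b hb => ?_⟩
  have hrel (j : ℕ) := (hA.sub_of_le (le_max_left i j)).2 a ha b hb
  exact ⟨⟨fun h => ⟨i, h⟩,
      fun ⟨j, h⟩ => (hrel j).1.mpr (hA.con_of_le (le_max_right i j) h)⟩,
    ⟨fun h => ⟨i, h⟩,
      fun ⟨j, h⟩ => (hrel j).2.mpr (hA.le_of_le (le_max_right i j) h)⟩⟩

theorem map {F : PrimeData α → PrimeData α} (hA : IsPSChain A) (hmono : Monotonic F)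
    (hF : ∀ A : PrimeData α, IsPrimeSystem A → IsPrimeSystem (F A)) :
    IsPSChain fun i => F (A i) :=
  ⟨fun i => hF _ (hA.1 i), fun i => hmono _ _ (hA.1 i) (hA.1 (i + 1)) (hA.2 i)⟩

end IsPSChain

/-- A unary operation `F` on prime systems is continuous with
respect to `⊴` if and only if `F` is monotonic and continuous on prime sets. -/
theorem continuousOp_iff_monotonic_and_contOnPrimeSets
    (F : PrimeData α → PrimeData α)
    (hF : ∀ A : PrimeData α, IsPrimeSystem A → IsPrimeSystem (F A)) :
    ContinuousOp F ↔ Monotonic F ∧ ContOnPrimeSets F := by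
  constructor
  · rintro ⟨hmono, hcomm⟩
    refine ⟨hmono, fun A hA c hc => ?_⟩
    rw [hcomm A hA] at hc
    exact Set.mem_iUnion.mp hc
  · rintro ⟨hmono, hcont⟩
    refine ⟨hmono, fun A hA => ?_⟩
    have hU := hA.isPrimeSystem_chainUnion
    have hFA := hA.map hmono hF
    refine (Sub.eq_of_carrier_subset hFA.isPrimeSystem_chainUnion (hF _ hU) ?_ ?_).symm
    · exact hFA.chainUnion_sub fun i => hmono _ _ (hA.1 i) hU (hA.sub_chainUnion i)
    · exact fun c hc => Set.mem_iUnion.mpr (hcont A hA c hc)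

end PrimeSys
end

section
/- For prime systems 𝒜 and ℬ, the structure 𝒜 → ℬ = (C, ≍, ≤), with C = Ā × B where Ā is the set of finite pairwise consistent sets of pairwise incomparable primes of 𝒜, (X,a) ≍ (Y,b) iff (X ≍ Y implies a ≍_B b), and (X,a) ≤ (Y,b) iff Y ≤ X and a ≤_B b, is itself a prime system. -/
set_option autoImplicit false

namespace PrimeSys

universe u v

variable {α : Type u} {β : Type v}

/-- `Ā`: the finite, pairwise consistent, pairwise incomparable subsets of the
prime set of `𝒜`. -/
def Abar (A : PrimeData α) : Set (Set α) :=
  {X | X.Finite ∧ X ⊆ A.carrier ∧ ∀ a ∈ X, ∀ b ∈ X, A.con a b ∧ (A.le a b → a = b)}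

/-- The function-space prime system `𝒜 → ℬ`: its primes are the pairs `(X, a)` with
`X ∈ Ā` and `a` a prime of `ℬ`; `(X,a) ≍ (Y,b)` iff (`X ≍ Y` implies `a ≍_B b`);
`(X,a) ≤ (Y,b)` iff `Y ≤ X` and `a ≤_B b`. -/
def funcPD (A : PrimeData α) (B : PrimeData β) : PrimeData (Set α × β) where
  carrier := {p | p.1 ∈ Abar A ∧ p.2 ∈ B.carrier}
  con p q :=
    (p.1 ∈ Abar A ∧ p.2 ∈ B.carrier) ∧ (q.1 ∈ Abar A ∧ q.2 ∈ B.carrier) ∧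
    ((∀ a ∈ p.1, ∀ b ∈ q.1, A.con a b) → B.con p.2 q.2)
  le p q :=
    (p.1 ∈ Abar A ∧ p.2 ∈ B.carrier) ∧ (q.1 ∈ Abar A ∧ q.2 ∈ B.carrier) ∧
    (∀ a ∈ q.1, ∃ b ∈ p.1, A.le a b) ∧ B.le p.2 q.2

end PrimeSys

namespace PrimeSys

universe u' v'

namespace PrimeData

variable {α : Type u'} (A : PrimeData α)

/-- The paper's `Y ≤ X` on `Ā`. -/
def SetLE (Y X : Set α) : Prop := ∀ a ∈ Y, ∃ b ∈ X, A.le a b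

def SetCon (X Y : Set α) : Prop := ∀ a ∈ X, ∀ b ∈ Y, A.con a b

end PrimeData

namespace IsPrimeSystem

open PrimeData

variable {α : Type u'} {A : PrimeData α} (hA : IsPrimeSystem A)
include hA

theorem setLE_refl {X : Set α} (hX : X ⊆ A.carrier) : A.SetLE X X :=
  fun a ha => ⟨a, ha, hA.le_refl a (hX ha)⟩

theorem setLE_trans {X Y Z : Set α} (hXY : A.SetLE X Y) (hYZ : A.SetLE Y Z) :
    A.SetLE X Z := fun a ha => by
  obtain ⟨b, hb, hab⟩ := hXY a ha
  obtain ⟨c, hc, hbc⟩ := hYZ b hb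
  exact ⟨c, hc, hA.le_trans _ _ _ hab hbc⟩

theorem setCon_symm {X Y : Set α} (h : A.SetCon X Y) : A.SetCon Y X :=
  fun b hb a ha => hA.con_symm _ _ (h a ha b hb)

theorem setCon_of_setLE {X Y Z : Set α} (hXY : A.SetCon X Y) (hZY : A.SetLE Z Y) :
    A.SetCon X Z := fun a ha c hc => by
  obtain ⟨b, hb, hcb⟩ := hZY c hc
  exact hA.con_dcl _ _ _ (hXY a ha b hb) hcb

/-- Going `X → Y → X` lands on a prime comparable with the start, hence equal to it
by the incomparability in `X ∈ Ā`; so the intermediate prime is the start too. -/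
theorem subset_of_setLE_of_setLE {X Y : Set α} (hX : X ∈ Abar A) (hXY : A.SetLE X Y)
    (hYX : A.SetLE Y X) : X ⊆ Y := fun a ha => by
  obtain ⟨b, hb, hab⟩ := hXY a ha
  obtain ⟨c, hc, hbc⟩ := hYX b hb
  obtain rfl : a = c := (hX.2.2 a ha c hc).2 (hA.le_trans _ _ _ hab hbc)
  obtain rfl : a = b := hA.le_antisymm _ _ hab hbc
  exact hb

theorem setLE_antisymm {X Y : Set α} (hX : X ∈ Abar A) (hY : Y ∈ Abar A)
    (hXY : A.SetLE X Y) (hYX : A.SetLE Y X) : X = Y :=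
  (hA.subset_of_setLE_of_setLE hX hXY hYX).antisymm (hA.subset_of_setLE_of_setLE hY hYX hXY)

end IsPrimeSystem

/-- For prime systems `𝒜` and `ℬ`, the structure `𝒜 → ℬ` is
itself a prime system. -/
theorem funcPD_isPrimeSystem {α : Type u'} {β : Type v'}
    (A : PrimeData α) (B : PrimeData β)
    (hA : IsPrimeSystem A) (hB : IsPrimeSystem B) :
    IsPrimeSystem (funcPD A B) := {
  con_mem := fun _ _ ⟨hp, hq, _⟩ => ⟨hp, hq⟩
  le_mem := fun _ _ ⟨hp, hq, _⟩ => ⟨hp, hq⟩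
  con_refl := fun _ hp => ⟨hp, hp, fun _ => hB.con_refl _ hp.2⟩
  con_symm := fun _ _ ⟨hp, hq, hpq⟩ =>
    ⟨hq, hp, fun hqp₁ => hB.con_symm _ _ (hpq (hA.setCon_symm hqp₁))⟩
  le_refl := fun _ hp => ⟨hp, hp, hA.setLE_refl hp.1.2.1, hB.le_refl _ hp.2⟩
  le_antisymm := fun _ _ ⟨hp, hq, hqp₁, hpq₂⟩ ⟨_, _, hpq₁, hqp₂⟩ =>
    Prod.ext (hA.setLE_antisymm hp.1 hq.1 hpq₁ hqp₁) (hB.le_antisymm _ _ hpq₂ hqp₂)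
  le_trans := fun _ _ _ ⟨hp, _, hqp₁, hpq₂⟩ ⟨_, hr, hrq₁, hqr₂⟩ =>
    ⟨hp, hr, hA.setLE_trans hrq₁ hqp₁, hB.le_trans _ _ _ hpq₂ hqr₂⟩
  con_dcl := fun _ _ _ ⟨hp, _, hpq⟩ ⟨hr, _, hqr₁, hrq₂⟩ =>
    ⟨hp, hr, fun hpr₁ => hB.con_dcl _ _ _ (hpq (hA.setCon_of_setLE hpr₁ hqr₁)) hrq₂⟩ }

end PrimeSys
end

section
/- For all prime systems 𝒜 and ℬ, the map r ↦ |r|, where |r|(d) = {a | ∃X ⊆ d. (X,a) ∈ r}, is an order isomorphism from the domain (elements(𝒜 → ℬ), ⊆) onto the cpo ([elements(𝒜) → elements(ℬ)], ⊆) of Scott-continuous functions ordered pointwise, and its inverse is the map f ↦ Pr(f) = {(X,a) | X ∈ Ā and a ∈ f(↓X)}. In particular for every element r of 𝒜 → ℬ the function |r| is Scott-continuous, and for every monotonic f : elements(𝒜) → elements(ℬ) the set Pr(f) is an element of 𝒜 → ℬ. -/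
/-! Every element `d` of `𝒜` is the directed union of the elements `↓X` with `X ∈ Ā`,
`X ⊆ d` (directed because the maximal elements of `X ∪ Y` again lie in `Ā`), so a
Scott-continuous `f` is determined by its values `f (↓X)`, which is what `Pr(f)` records.
Conversely `(X, a) ∈ r` iff `a ∈ |r|(↓X)`, since `(Z, a) ≤ (X, a)` whenever `Z ⊆ ↓X`; this
gives `Pr(|r|) = r` and, with it, that `r ↦ |r|` reflects inclusion. -/

set_option autoImplicit false

namespace PrimeSys

universe u' v'

variable {α : Type u'} {β : Type v'}

/-- The function `|r|` associated with a set `r` of function-space primes: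
`|r|(d) = {b ∣ ∃ X ⊆ d. (X, b) ∈ r}`. -/
def flr (r : Set (Set α × β)) (d : Set α) : Set β :=
  {b | ∃ X, X ⊆ d ∧ (X, b) ∈ r}

/-- The downward closure `↓X` of a set of primes in `𝒜`. -/
def downcl (A : PrimeData α) (X : Set α) : Set α := {a | ∃ x ∈ X, A.le a x}

/-- The prime set `Pr(f) = {(X, a) ∣ X ∈ Ā ∧ a ∈ f(↓X)}` of a function `f`. -/
def PrF (A : PrimeData α) (f : Set α → Set β) : Set (Set α × β) :=
  {p | p.1 ∈ Abar A ∧ p.2 ∈ f (downcl A p.1)}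

/-- `f` maps elements of `𝒜` to elements of `ℬ` and is monotonic on them. -/
def MonoOnElems (A : PrimeData α) (B : PrimeData β) (f : Set α → Set β) : Prop :=
  (∀ d, A.IsElement d → B.IsElement (f d)) ∧
  ∀ d e, A.IsElement d → A.IsElement e → d ⊆ e → f d ⊆ f e

/-- `f` is a Scott-continuous function from the domain of `𝒜` to the domain of `ℬ`:
it maps elements to elements, is monotonic, and preserves lubs (unions) of
directed nonempty sets of elements. -/
def ScottContOnElems (A : PrimeData α) (B : PrimeData β) (f : Set α → Set β) : Prop :=
  MonoOnElems A B f ∧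
  ∀ S : Set (Set α), S.Nonempty → (∀ d ∈ S, A.IsElement d) →
    DirectedOn (· ⊆ ·) S → f (⋃₀ S) = ⋃ d ∈ S, f d

section Downcl

variable {A : PrimeData α}

lemma subset_downcl (hA : IsPrimeSystem A) {X : Set α} (hX : X ⊆ A.carrier) :
    X ⊆ downcl A X :=
  fun a ha => ⟨a, ha, hA.le_refl a (hX ha)⟩

lemma downcl_union (X Y : Set α) : downcl A (X ∪ Y) = downcl A X ∪ downcl A Y := by
  ext a
  simp only [downcl, Set.mem_union, Set.mem_ofPred_eq, or_and_right, exists_or]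

lemma downcl_subset_downcl (hA : IsPrimeSystem A) {X Y : Set α} (hYX : Y ⊆ downcl A X) :
    downcl A Y ⊆ downcl A X := by
  rintro c ⟨y, hy, hcy⟩
  obtain ⟨x, hx, hyx⟩ := hYX hy
  exact ⟨x, hx, hA.le_trans _ _ _ hcy hyx⟩

lemma downcl_subset_of_subset {d X : Set α} (hd : A.IsElement d) (hX : X ⊆ d) :
    downcl A X ⊆ d := by
  rintro a ⟨x, hx, hle⟩
  exact hd.2.1 _ _ hle (hX hx)

lemma isElement_downcl (hA : IsPrimeSystem A) {X : Set α}
    (hcon : ∀ a ∈ X, ∀ b ∈ X, A.con a b) : A.IsElement (downcl A X) := by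
  refine ⟨?_, ?_, ?_⟩
  · rintro a ⟨x, _, hle⟩
    exact (hA.le_mem _ _ hle).1
  · rintro a b hab ⟨x, hx, hle⟩
    exact ⟨x, hx, hA.le_trans _ _ _ hab hle⟩
  · rintro a ⟨x, hx, hax⟩ b ⟨y, hy, hby⟩
    have hxb : A.con x b := hA.con_dcl _ _ _ (hcon x hx y hy) hby
    exact hA.con_symm _ _ (hA.con_dcl _ _ _ (hA.con_symm _ _ hxb) hax)

lemma isElement_downcl_of_mem_Abar (hA : IsPrimeSystem A) {X : Set α} (hX : X ∈ Abar A) :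
    A.IsElement (downcl A X) :=
  isElement_downcl hA fun a ha b hb => (hX.2.2 a ha b hb).1

lemma isElement_downcl_union (hA : IsPrimeSystem A) {X Y : Set α} (hX : X ∈ Abar A)
    (hY : Y ∈ Abar A) (hXY : ∀ a ∈ X, ∀ b ∈ Y, A.con a b) :
    A.IsElement (downcl A X ∪ downcl A Y) := by
  rw [← downcl_union]
  refine isElement_downcl hA ?_
  rintro a (ha | ha) b (hb | hb)
  · exact (hX.2.2 a ha b hb).1
  · exact hXY a ha b hb
  · exact hA.con_symm _ _ (hXY b hb a ha)
  · exact (hY.2.2 a ha b hb).1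

lemma exists_le_maximal (hA : IsPrimeSystem A) {X : Set α} (hXf : X.Finite) {a : α}
    (ha : a ∈ X) (haA : a ∈ A.carrier) :
    ∃ m ∈ X, A.le a m ∧ ∀ c ∈ X, A.le m c → m = c := by
  let above : α → α → Prop := fun c m => A.le m c ∧ m ≠ c
  have : IsStrictOrder α above :=
    { irrefl := fun _ h => h.2 rfl
      trans := fun _ _ _ hab hbc =>
        ⟨hA.le_trans _ _ _ hbc.1 hab.1, fun hca => hab.2 <|
          hA.le_antisymm _ _ hab.1 (hca ▸ hbc.1)⟩ }
  obtain ⟨m, ⟨hmX, ham⟩, hmax⟩ :=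
    (Set.wellFoundedOn_iff.mp (hXf.wellFoundedOn (r := above))).has_min
      {m | m ∈ X ∧ A.le a m} ⟨a, ha, hA.le_refl a haA⟩
  refine ⟨m, hmX, ham, fun c hcX hmc => ?_⟩
  by_contra hne
  exact hmax c ⟨hcX, hA.le_trans _ _ _ ham hmc⟩ ⟨⟨hmc, hne⟩, hcX, hmX⟩

lemma exists_mem_Abar_downcl_eq (hA : IsPrimeSystem A) {X : Set α} (hXf : X.Finite)
    (hXA : X ⊆ A.carrier) (hcon : ∀ a ∈ X, ∀ b ∈ X, A.con a b) :
    ∃ M ∈ Abar A, M ⊆ X ∧ downcl A X = downcl A M := by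
  set M := {m ∈ X | ∀ c ∈ X, A.le m c → m = c}
  have hMX : M ⊆ X := fun m hm => hm.1
  refine ⟨M, ⟨hXf.subset hMX, hMX.trans hXA, fun a ha b hb => ⟨hcon a ha.1 b hb.1,
    ha.2 b hb.1⟩⟩, hMX, (downcl_subset_downcl hA ?_).antisymm (downcl_subset_downcl hA ?_)⟩
  · intro x hx
    obtain ⟨m, hmX, hxm, hmax⟩ := exists_le_maximal hA hXf hx (hXA hx)
    exact ⟨m, ⟨hmX, hmax⟩, hxm⟩
  · exact hMX.trans (subset_downcl hA hXA)

end Downcl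

section Approximants

variable {A : PrimeData α}

def finiteApprox (A : PrimeData α) (d : Set α) : Set (Set α) :=
  downcl A '' {X | X ∈ Abar A ∧ X ⊆ d}

lemma isElement_of_mem_finiteApprox (hA : IsPrimeSystem A) {d e : Set α}
    (he : e ∈ finiteApprox A d) : A.IsElement e := by
  obtain ⟨X, ⟨hX, _⟩, rfl⟩ := he
  exact isElement_downcl_of_mem_Abar hA hX

lemma finiteApprox_nonempty (d : Set α) : (finiteApprox A d).Nonempty :=
  ⟨downcl A ∅, ∅,
    ⟨⟨Set.finite_empty, Set.empty_subset _, by simp⟩, Set.empty_subset d⟩, rfl⟩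

lemma sUnion_finiteApprox (hA : IsPrimeSystem A) {d : Set α} (hd : A.IsElement d) :
    ⋃₀ finiteApprox A d = d := by
  refine Set.Subset.antisymm ?_ fun a ha => ?_
  · rintro a ⟨_, ⟨X, ⟨_, hXd⟩, rfl⟩, ha⟩
    exact downcl_subset_of_subset hd hXd ha
  · have haA : a ∈ A.carrier := hd.1 ha
    have hsingle : ({a} : Set α) ∈ Abar A :=
      ⟨Set.finite_singleton a, Set.singleton_subset_iff.mpr haA, by
        simpa using hA.con_refl a haA⟩
    exact ⟨downcl A {a}, ⟨{a}, ⟨hsingle, Set.singleton_subset_iff.mpr ha⟩, rfl⟩,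
      subset_downcl hA hsingle.2.1 rfl⟩

lemma directedOn_finiteApprox (hA : IsPrimeSystem A) {d : Set α} (hd : A.IsElement d) :
    DirectedOn (· ⊆ ·) (finiteApprox A d) := by
  rintro _ ⟨X, ⟨hX, hXd⟩, rfl⟩ _ ⟨Y, ⟨hY, hYd⟩, rfl⟩
  have hXYd : X ∪ Y ⊆ d := Set.union_subset hXd hYd
  obtain ⟨M, hM, hMXY, hdowncl⟩ := exists_mem_Abar_downcl_eq hA (hX.1.union hY.1)
    (hXYd.trans hd.1) fun a ha b hb => hd.2.2 a (hXYd ha) b (hXYd hb)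
  rw [downcl_union] at hdowncl
  exact ⟨downcl A M, ⟨M, ⟨hM, hMXY.trans hXYd⟩, rfl⟩,
    hdowncl ▸ Set.subset_union_left, hdowncl ▸ Set.subset_union_right⟩

end Approximants

section FunctionSpace

variable {A : PrimeData α} {B : PrimeData β}

lemma flr_mono (r : Set (Set α × β)) {d e : Set α} (hde : d ⊆ e) : flr r d ⊆ flr r e :=
  fun _ ⟨X, hXd, hXr⟩ => ⟨X, hXd.trans hde, hXr⟩

lemma flr_sUnion {r : Set (Set α × β)} (hr : ∀ p ∈ r, p.1.Finite) {S : Set (Set α)}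
    (hne : S.Nonempty) (hdir : DirectedOn (· ⊆ ·) S) :
    flr r (⋃₀ S) = ⋃ d ∈ S, flr r d := by
  refine Set.Subset.antisymm ?_ ?_
  · rintro b ⟨X, hXS, hXr⟩
    obtain ⟨d, hdS, hXd⟩ :=
      hdir.exists_mem_subset_of_finite_of_subset_sUnion hne (hr _ hXr) hXS
    exact Set.mem_biUnion hdS ⟨X, hXd, hXr⟩
  · exact Set.iUnion₂_subset fun d hdS => flr_mono r (Set.subset_sUnion_of_mem hdS)

lemma mem_of_subset_downcl (hB : IsPrimeSystem B) {r : Set (Set α × β)}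
    (hr : (funcPD A B).IsElement r) {X Z : Set α} {b : β} (hX : X ∈ Abar A)
    (hZ : (Z, b) ∈ r) (hZX : Z ⊆ downcl A X) : (X, b) ∈ r := by
  have hZc : Z ∈ Abar A ∧ b ∈ B.carrier := hr.1 hZ
  exact hr.2.1 (X, b) (Z, b) ⟨⟨hX, hZc.2⟩, hZc, hZX, hB.le_refl _ hZc.2⟩ hZ

lemma isElement_flr (hA : IsPrimeSystem A) (hB : IsPrimeSystem B) {r : Set (Set α × β)}
    (hr : (funcPD A B).IsElement r) {d : Set α} (hd : A.IsElement d) :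
    B.IsElement (flr r d) := by
  refine ⟨?_, ?_, ?_⟩
  · rintro b ⟨X, _, hXr⟩
    exact (hr.1 hXr).2
  · rintro b b' hbb' ⟨X, hXd, hXr⟩
    have hX : X ∈ Abar A ∧ b' ∈ B.carrier := hr.1 hXr
    exact ⟨X, hXd, hr.2.1 (X, b) (X, b')
      ⟨⟨hX.1, (hB.le_mem _ _ hbb').1⟩, hX, subset_downcl hA hX.1.2.1, hbb'⟩ hXr⟩
  · rintro b ⟨X, hXd, hXr⟩ b' ⟨Y, hYd, hYr⟩
    exact (hr.2.2 _ hXr _ hYr).2.2 fun x hx y hy => hd.2.2 x (hXd hx) y (hYd hy)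

lemma scottContOnElems_flr (hA : IsPrimeSystem A) (hB : IsPrimeSystem B)
    {r : Set (Set α × β)} (hr : (funcPD A B).IsElement r) : ScottContOnElems A B (flr r) :=
  ⟨⟨fun _ hd => isElement_flr hA hB hr hd, fun _ _ _ _ => flr_mono r⟩,
    fun _ hne _ hdir => flr_sUnion (fun _ hp => (hr.1 hp).1.1) hne hdir⟩

lemma isElement_PrF (hA : IsPrimeSystem A) {f : Set α → Set β} (hf : MonoOnElems A B f) :
    (funcPD A B).IsElement (PrF A f) := by
  have hfX : ∀ X ∈ Abar A, B.IsElement (f (downcl A X)) :=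
    fun X hX => hf.1 _ (isElement_downcl_of_mem_Abar hA hX)
  refine ⟨fun p hp => ⟨hp.1, (hfX _ hp.1).1 hp.2⟩, ?_, ?_⟩
  · rintro ⟨X, a⟩ ⟨Y, b⟩ ⟨⟨hX, _⟩, ⟨hY, _⟩, hYX, hab⟩ ⟨_, hb⟩
    have hbX : b ∈ f (downcl A X) := hf.2 _ _ (isElement_downcl_of_mem_Abar hA hY)
      (isElement_downcl_of_mem_Abar hA hX) (downcl_subset_downcl hA hYX) hb
    exact ⟨hX, (hfX X hX).2.1 _ _ hab hbX⟩
  · rintro ⟨X, a⟩ ⟨hX, ha⟩ ⟨Y, b⟩ ⟨hY, hb⟩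
    refine ⟨⟨hX, (hfX X hX).1 ha⟩, ⟨hY, (hfX Y hY).1 hb⟩, fun hXY => ?_⟩
    -- `a` and `b` both lie in `f (↓X ∪ ↓Y)`, and `↓X ∪ ↓Y` is an element.
    have hU := isElement_downcl_union hA hX hY hXY
    exact (hf.1 _ hU).2.2 a
      (hf.2 _ _ (isElement_downcl_of_mem_Abar hA hX) hU Set.subset_union_left ha) b
      (hf.2 _ _ (isElement_downcl_of_mem_Abar hA hY) hU Set.subset_union_right hb)

lemma PrF_flr (hA : IsPrimeSystem A) (hB : IsPrimeSystem B) {r : Set (Set α × β)}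
    (hr : (funcPD A B).IsElement r) : PrF A (flr r) = r := by
  ext ⟨X, b⟩
  refine ⟨fun ⟨hX, Z, hZX, hZ⟩ => mem_of_subset_downcl hB hr hX hZ hZX, fun h => ?_⟩
  have hX : X ∈ Abar A := (hr.1 h).1
  exact ⟨hX, X, subset_downcl hA hX.2.1, h⟩

lemma flr_PrF_eq_biUnion (f : Set α → Set β) (d : Set α) :
    flr (PrF A f) d = ⋃ e ∈ finiteApprox A d, f e := by
  ext b
  simp only [flr, PrF, finiteApprox, Set.biUnion_image, Set.mem_iUnion,
    exists_prop]
  exact ⟨fun ⟨X, hXd, hX, hb⟩ => ⟨X, ⟨hX, hXd⟩, hb⟩,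
    fun ⟨X, ⟨hX, hXd⟩, hb⟩ => ⟨X, hXd, hX, hb⟩⟩

lemma flr_PrF (hA : IsPrimeSystem A) {f : Set α → Set β} (hf : ScottContOnElems A B f)
    {d : Set α} (hd : A.IsElement d) : flr (PrF A f) d = f d := by
  rw [flr_PrF_eq_biUnion, ← hf.2 _ (finiteApprox_nonempty d)
    (fun _ => isElement_of_mem_finiteApprox hA) (directedOn_finiteApprox hA hd),
    sUnion_finiteApprox hA hd]

lemma PrF_mono {f g : Set α → Set β}
    (hfg : ∀ X ∈ Abar A, f (downcl A X) ⊆ g (downcl A X)) :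
    PrF A f ⊆ PrF A g :=
  fun _ hp => ⟨hp.1, hfg _ hp.1 hp.2⟩

lemma flr_subset_flr_iff (hA : IsPrimeSystem A) (hB : IsPrimeSystem B)
    {r s : Set (Set α × β)} (hr : (funcPD A B).IsElement r) (hs : (funcPD A B).IsElement s) :
    r ⊆ s ↔ ∀ d, A.IsElement d → flr r d ⊆ flr s d := by
  refine ⟨fun hrs _ _ => fun _ ⟨X, hXd, hX⟩ => ⟨X, hXd, hrs hX⟩, fun h => ?_⟩
  rw [← PrF_flr hA hB hr, ← PrF_flr hA hB hs]
  exact PrF_mono fun X hX => h _ (isElement_downcl_of_mem_Abar hA hX)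

end FunctionSpace

/-- For all prime systems `𝒜`, `ℬ`, the map `r ↦ |r|` is an
order isomorphism from `(elements(𝒜 → ℬ), ⊆)` onto the cpo of Scott-continuous
functions from `elements(𝒜)` to `elements(ℬ)` ordered pointwise, with inverse
`f ↦ Pr(f)`.  In particular `|r|` is Scott-continuous for every element `r` of
`𝒜 → ℬ`, and `Pr(f)` is an element of `𝒜 → ℬ` for every monotonic `f`. -/
theorem flr_orderIso (A : PrimeData α) (B : PrimeData β)
    (hA : IsPrimeSystem A) (hB : IsPrimeSystem B) :
    (∀ r, (funcPD A B).IsElement r → ScottContOnElems A B (flr r)) ∧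
    (∀ f, MonoOnElems A B f → (funcPD A B).IsElement (PrF A f)) ∧
    (∀ r, (funcPD A B).IsElement r → PrF A (flr r) = r) ∧
    (∀ f, ScottContOnElems A B f → ∀ d, A.IsElement d → flr (PrF A f) d = f d) ∧
    (∀ r s, (funcPD A B).IsElement r → (funcPD A B).IsElement s →
      (r ⊆ s ↔ ∀ d, A.IsElement d → flr r d ⊆ flr s d)) :=
  ⟨fun _ => scottContOnElems_flr hA hB, fun _ => isElement_PrF hA,
    fun _ => PrF_flr hA hB, fun _ hf _ => flr_PrF hA hf,
    fun _ _ => flr_subset_flr_iff hA hB⟩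

end PrimeSys
end
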